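/- arXiv:2604.04610 — 6 statements merged into one kernel-verified Lean document; each statement's English description precedes it below -/
import Mathlib

section
/- For every integer n ≥ 3, the coefficients c_n and d_n of the quadratic associated with the l = 1 block are both negative: c_n < 0 and d_n < 0. -/
open Real Finset

noncomputable section

/-- θ = 2π/n -/
def theta (n : ℕ) : ℝ := 2 * Real.pi / n

/-- d_k = 2 sin(kπ/n) -/
def dk (n k : ℕ) : ℝ := 2 * Real.sin (k * Real.pi / n)

/-- d₀ = Σ_{k=1}^{n-1} 1/d_k -/
def dzero (n : ℕ) : ℝ := ∑ k ∈ Finset.Icc 1 (n - 1), 1 / dk n k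

/-- I₀ = √n -/
def Izero (n : ℕ) : ℝ := Real.sqrt n

/-- U_{e0} = n d₀ / 2 -/
def Ue (n : ℕ) : ℝ := n * dzero n / 2

/-- U₀ = U_{e0} + n m -/
def Uzero (n : ℕ) (m : ℝ) : ℝ := Ue n + n * m

/-- U_{11} = Σ_{k=1}^{n−1} sin²(kθ)/(2 d_k³), a real number. -/
def U11 (n : ℕ) : ℝ :=
  ∑ k ∈ Finset.Icc 1 (n - 1), Real.sin (k * theta n) ^ 2 / (2 * dk n k ^ 3)

/-- U_{12} = i·Σ_{k=1}^{n−1} sin²(kθ)/(2 d_k³) = i U_{11}. -/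
def U12 (n : ℕ) : ℂ := Complex.I * (U11 n : ℂ)

/-- U'_{11} = −U_{12}. -/
def U11' (n : ℕ) : ℂ := -U12 n

/-- U'_{12} = U_{11}. -/
def U12' (n : ℕ) : ℂ := (U11 n : ℂ)

/-- The 3×3 block A₁(m) coupling the first Fourier mode with the central mass. -/
def A1block (n : ℕ) (m : ℝ) : Matrix (Fin 3) (Fin 3) ℂ :=
  !![((Uzero n m / Izero n : ℝ) : ℂ) + (Izero n : ℂ) * ((U11 n : ℂ) + 2 * (m : ℂ)),
      -Complex.I * (Izero n : ℂ) * U11' n,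
      -2 * (Izero n : ℂ) * (m : ℂ);
     Complex.I * (Izero n : ℂ) * U12 n,
      ((Uzero n m / Izero n : ℝ) : ℂ) + (Izero n : ℂ) * (U12' n - (m : ℂ)),
      (Izero n : ℂ) * (m : ℂ);
     -(Izero n : ℂ) * (n : ℂ) * (m : ℂ),
      (Izero n : ℂ) * (n : ℂ) * (m : ℂ),
      2 * ((Uzero n m : ℝ) : ℂ) * (m : ℂ) / (Izero n : ℂ)
        + (Izero n : ℂ) * (n : ℂ) * (m : ℂ) / 2]

/-- b_n = 3 I₀ (I₀³/2 − U_{e0}/I₀ − I₀ U_{11}). -/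
def bcoef (n : ℕ) : ℝ :=
  3 * Izero n * (Izero n ^ 3 / 2 - Ue n / Izero n - Izero n * U11 n)

/-- c_n = I₀² U_{e0} − 4 U_{e0}²/I₀² − I₀⁴ U_{11} − 5 U_{e0} U_{11}. -/
def ccoef (n : ℕ) : ℝ :=
  Izero n ^ 2 * Ue n - 4 * Ue n ^ 2 / Izero n ^ 2 - Izero n ^ 4 * U11 n - 5 * Ue n * U11 n

/-- d_n = −(I₀²/2 + U_{e0}/I₀²)(U_{e0}²/I₀² + 2 U_{e0} U_{11}). -/
def dcoef (n : ℕ) : ℝ :=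
  -(Izero n ^ 2 / 2 + Ue n / Izero n ^ 2) * (Ue n ^ 2 / Izero n ^ 2 + 2 * Ue n * U11 n)

def Tsum (n : ℕ) : ℝ := ∑ k ∈ Finset.Icc 1 (n-1), 1 / Real.sin (k * Real.pi / n)
def Vsum (n : ℕ) : ℝ :=
  ∑ k ∈ Finset.Icc 1 (n-1), Real.cos (k * Real.pi / n) ^ 2 / (4 * Real.sin (k * Real.pi / n))

lemma aux_sin_pos {n k : ℕ} (hn : 3 ≤ n) (hk : k ∈ Finset.Icc 1 (n-1)) :
    0 < Real.sin (k * Real.pi / n) := by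
  rw [Finset.mem_Icc] at hk
  have hn0 : (0:ℝ) < n := by positivity
  have hk1 : (1:ℝ) ≤ k := by exact_mod_cast hk.1
  have hkn : (k:ℝ) < n := by
    have : k < n := by omega
    exact_mod_cast this
  apply Real.sin_pos_of_pos_of_lt_pi
  · have := Real.pi_pos
    positivity
  · rw [div_lt_iff₀ hn0]
    nlinarith [Real.pi_pos]

lemma aux_Ue (n : ℕ) : Ue n = n * Tsum n / 4 := by
  unfold Ue dzero dk Tsum
  have h : ∑ k ∈ Finset.Icc 1 (n-1), 1 / (2 * Real.sin (k * Real.pi / n))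
      = (∑ k ∈ Finset.Icc 1 (n-1), 1 / Real.sin (k * Real.pi / n)) / 2 := by
    rw [Finset.sum_div]
    apply Finset.sum_congr rfl
    intro k _
    rw [div_div]
    ring_nf
  rw [h]
  ring

lemma aux_U11 {n : ℕ} (hn : 3 ≤ n) : U11 n = Vsum n := by
  unfold U11 Vsum
  apply Finset.sum_congr rfl
  intro k hk
  have hs := aux_sin_pos hn hk
  have harg : (k:ℝ) * theta n = 2 * ((k:ℝ) * Real.pi / n) := by unfold theta; ring
  rw [harg, Real.sin_two_mul]
  unfold dk
  field_simp
  ring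

lemma pt1 {s c : ℝ} (hs : 0 < s) (h1 : s ≤ 1) (hc : s^2 + c^2 = 1) :
    1 ≤ 1/s + 5*c^2/(4*s) := by
  have h : 1/s + 5*c^2/(4*s) = (4 + 5*c^2)/(4*s) := by
    field_simp
    try ring
  rw [h, le_div_iff₀ (by positivity)]
  nlinarith [mul_nonneg (sub_nonneg.2 h1) hs.le]

lemma pt2 {s c : ℝ} (hs : 0 < s) (h1 : s ≤ Real.sqrt 3 / 2) (hc : s^2 + c^2 = 1) :
    7 * Real.sqrt 3 / 8 ≤ 1/s + 5*c^2/(4*s) := by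
  have h3 : Real.sqrt 3 ^ 2 = 3 := Real.sq_sqrt (by norm_num)
  have h0 : (0:ℝ) ≤ Real.sqrt 3 := Real.sqrt_nonneg 3
  have h : 1/s + 5*c^2/(4*s) = (4 + 5*c^2)/(4*s) := by
    field_simp
    try ring
  rw [h, div_le_div_iff₀ (by positivity) (by positivity)]
  nlinarith [mul_nonneg (sub_nonneg.2 h1)
    (by positivity : (0:ℝ) ≤ 5*s + 6*Real.sqrt 3)]

lemma aux_key {n : ℕ} (hn : 3 ≤ n) : (n:ℝ) < Tsum n + 5 * Vsum n := by
  have hπ := Real.pi_pos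
  have hn0 : (0:ℝ) < n := by positivity
  set f : ℕ → ℝ := fun k =>
    1 / Real.sin (k * Real.pi / n) +
      5 * Real.cos (k * Real.pi / n) ^ 2 / (4 * Real.sin (k * Real.pi / n)) with hf
  have hTV : Tsum n + 5 * Vsum n = ∑ k ∈ Finset.Icc 1 (n-1), f k := by
    unfold Tsum Vsum
    rw [Finset.mul_sum, ← Finset.sum_add_distrib]
    apply Finset.sum_congr rfl
    intro k _
    simp [hf]
    ring
  -- split the sum
  have hsplit : Finset.Icc 1 (n-1) = insert 1 (insert (n-1) (Finset.Icc 2 (n-2))) := by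
    ext k
    simp only [Finset.mem_Icc, Finset.mem_insert]
    omega
  have h1ni : (1:ℕ) ∉ insert (n-1) (Finset.Icc 2 (n-2)) := by
    simp only [Finset.mem_insert, Finset.mem_Icc]
    omega
  have hn1ni : (n-1) ∉ Finset.Icc 2 (n-2) := by
    simp only [Finset.mem_Icc]
    omega
  rw [hTV, hsplit, Finset.sum_insert h1ni, Finset.sum_insert hn1ni]
  -- bound for sin(π/n)
  have hmem1 : (1:ℕ) ∈ Finset.Icc 1 (n-1) := by simp [Finset.mem_Icc]; omega
  have hs1 : 0 < Real.sin (Real.pi / n) := by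
    have := aux_sin_pos hn hmem1; simpa using this
  have hsle : Real.sin (Real.pi / n) ≤ Real.sqrt 3 / 2 := by
    rw [← Real.sin_pi_div_three]
    have hn3 : (3:ℝ) ≤ n := by exact_mod_cast hn
    apply Real.sin_le_sin_of_le_of_le_pi_div_two
    · have : 0 < Real.pi / n := by positivity
      linarith
    · linarith
    · rw [div_le_div_iff₀ hn0 (by norm_num : (0:ℝ) < 3)]
      nlinarith [hn3, hπ]
  -- f 1 bound
  have hb1 : 7 * Real.sqrt 3 / 8 ≤ f 1 := by
    have := pt2 hs1 hsle (Real.sin_sq_add_cos_sq (Real.pi / n))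
    simpa [hf] using this
  -- f (n-1) bound
  have hcast : ((n-1 : ℕ) : ℝ) = (n:ℝ) - 1 := by
    have : 1 ≤ n := by omega
    push_cast [this]; ring
  have hargn : ((n-1:ℕ):ℝ) * Real.pi / n = Real.pi - Real.pi / n := by
    rw [hcast]; field_simp
  have hbn : 7 * Real.sqrt 3 / 8 ≤ f (n-1) := by
    have hsin : Real.sin (((n-1:ℕ):ℝ) * Real.pi / n) = Real.sin (Real.pi / n) := by
      rw [hargn, Real.sin_pi_sub]
    have hcos : Real.cos (((n-1:ℕ):ℝ) * Real.pi / n) ^ 2 = Real.cos (Real.pi / n) ^ 2 := by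
      rw [hargn, Real.cos_pi_sub]; ring
    have := pt2 hs1 hsle (Real.sin_sq_add_cos_sq (Real.pi / n))
    simp only [hf]
    rw [hsin, hcos]
    exact this
  -- middle sum bound
  have hmid : ((n:ℝ) - 3) ≤ ∑ k ∈ Finset.Icc 2 (n-2), f k := by
    have hcard : (Finset.Icc 2 (n-2)).card = n - 3 := by
      rw [Nat.card_Icc]; omega
    have h := Finset.card_nsmul_le_sum (Finset.Icc 2 (n-2)) f 1 ?_
    · rw [hcard] at h
      have : ((n-3 : ℕ):ℝ) = (n:ℝ) - 3 := by
        have : 3 ≤ n := hn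
        push_cast [this]; ring
      rw [nsmul_eq_mul, mul_one] at h
      rw [← this]
      exact_mod_cast h
    · intro k hk
      have hk' : k ∈ Finset.Icc 1 (n-1) := by
        rw [Finset.mem_Icc] at hk ⊢; omega
      have hs := aux_sin_pos hn hk'
      have := pt1 hs (Real.sin_le_one _) (Real.sin_sq_add_cos_sq ((k:ℝ) * Real.pi / n))
      simpa [hf] using this
  -- combine: 2*(7√3/8) + (n-3) > n  ⟺  7√3/4 > 3
  have h3 : Real.sqrt 3 ^ 2 = 3 := Real.sq_sqrt (by norm_num)
  have h0 : (0:ℝ) ≤ Real.sqrt 3 := Real.sqrt_nonneg 3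
  have h12 : (12:ℝ) < 7 * Real.sqrt 3 := by nlinarith [h3, h0]
  have hsum : 7 * Real.sqrt 3 / 8 + (7 * Real.sqrt 3 / 8 + ((n:ℝ) - 3))
      ≤ f 1 + (f (n-1) + ∑ k ∈ Finset.Icc 2 (n-2), f k) := by
    gcongr
  refine lt_of_lt_of_le ?_ hsum
  linarith [h12]

/-- for every n ≥ 3, c_n < 0 and d_n < 0. -/
theorem ccoef_neg_dcoef_neg (n : ℕ) (hn : 3 ≤ n) : ccoef n < 0 ∧ dcoef n < 0 := by
  unfold ccoef dcoef
  have hn0 : (0:ℝ) < n := by positivity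
  have hI2 : Izero n ^ 2 = n := Real.sq_sqrt (by positivity)
  have hUe : Ue n = n * Tsum n / 4 := aux_Ue n
  have hU11 : U11 n = Vsum n := aux_U11 hn
  have hT : 0 < Tsum n := by
    apply Finset.sum_pos
    · intro k hk
      have := aux_sin_pos hn hk
      positivity
    · exact ⟨1, by simp [Finset.mem_Icc]; omega⟩
  have hV : 0 ≤ Vsum n := by
    apply Finset.sum_nonneg
    intro k hk
    have := aux_sin_pos hn hk
    positivity
  have hkey : (n:ℝ) < Tsum n + 5 * Vsum n := aux_key hn
  constructor
  · rw [hI2, hUe, hU11]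
    have h4 : Izero n ^ 4 = (n:ℝ)^2 := by
      have : Izero n ^ 4 = (Izero n ^ 2)^2 := by ring
      rw [this, hI2]
    rw [h4]
    have heq : (n:ℝ) * ((n:ℝ) * Tsum n / 4) - 4 * ((n:ℝ) * Tsum n / 4) ^ 2 / (n:ℝ)
        - (n:ℝ)^2 * Vsum n - 5 * ((n:ℝ) * Tsum n / 4) * Vsum n
        = ((n:ℝ) / 4) * ((n:ℝ) * Tsum n - Tsum n ^2 - 4 * (n:ℝ) * Vsum n - 5 * Tsum n * Vsum n) := by
      field_simp
    rw [heq]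
    apply mul_neg_of_pos_of_neg (by positivity)
    nlinarith [mul_pos hT (sub_pos.2 hkey)]
  · rw [hI2]
    have hUe' : 0 < Ue n := by rw [hUe]; positivity
    have hU11' : 0 ≤ U11 n := by rw [hU11]; exact hV
    have hA : 0 < (n:ℝ)/2 + Ue n / n := by positivity
    have hB : 0 < Ue n ^2 / n + 2 * Ue n * U11 n := by positivity
    nlinarith


end
end

section
/- For every integer n with 3 ≤ n ≤ 6 one has b_n > 0, and for every integer n ≥ 7 one has b_n < 0. -/
open Real Finset

noncomputable section

/-! ### Auxiliary lemmas -/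

lemma nonneg_of_deriv' {f f' : ℝ → ℝ} (hd : ∀ x, HasDerivAt f (f' x) x)
    (h0 : f 0 = 0) (hp : ∀ x, 0 ≤ x → 0 ≤ f' x) {x : ℝ} (hx : 0 ≤ x) : 0 ≤ f x := by
  have mono : MonotoneOn f (Set.Ici (0:ℝ)) := by
    apply monotoneOn_of_deriv_nonneg (convex_Ici 0)
      (fun y _ => (hd y).continuousAt.continuousWithinAt)
      (fun y hy => ((hd y).differentiableAt).differentiableWithinAt)
    intro y hy
    rw [(hd y).deriv]
    exact hp y (le_of_lt (by simpa [interior_Ici] using hy))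
  calc (0:ℝ) = f 0 := h0.symm
  _ ≤ f x := mono Set.self_mem_Ici hx hx

lemma sin_ge_poly (x : ℝ) (hx : 0 ≤ x) : x - x^3/6 ≤ Real.sin x := by
  have hd : ∀ y : ℝ, HasDerivAt (fun z => Real.sin z - (z - z^3/6))
      (Real.cos y - (1 - y^2/2)) y := by
    intro y
    have h2 : HasDerivAt (fun z : ℝ => z - z^3/6) (1 - y^2/2) y := by
      have h3 := (hasDerivAt_pow 3 y).div_const 6
      have := (hasDerivAt_id y).sub h3
      convert this using 1
      rfl; rfl; rfl
      norm_num; ring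
    exact (Real.hasDerivAt_sin y).sub h2
  have := nonneg_of_deriv' hd (by norm_num) (fun y hy => by
    have := Real.one_sub_sq_div_two_le_cos (x := y); linarith) hx
  linarith [this]

lemma cos_le_poly (x : ℝ) (hx : 0 ≤ x) : Real.cos x ≤ 1 - x^2/2 + x^4/24 := by
  have hd : ∀ y : ℝ, HasDerivAt (fun z => (1 - z^2/2 + z^4/24) - Real.cos z)
      ((- y + y^3/6) - (- Real.sin y)) y := by
    intro y
    have h2 : HasDerivAt (fun z : ℝ => 1 - z^2/2 + z^4/24) (- y + y^3/6) y := by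
      have ha := ((hasDerivAt_pow 2 y).div_const 2)
      have hb := ((hasDerivAt_pow 4 y).div_const 24)
      have := ((hasDerivAt_const y (1:ℝ)).sub ha).add hb
      convert this using 1
      rfl; rfl; rfl
      norm_num; ring
    exact h2.sub (Real.hasDerivAt_cos y)
  have := nonneg_of_deriv' hd (by norm_num) (fun y hy => by
    have := sin_ge_poly y hy; linarith) hx
  linarith [this]

lemma sin_le_poly (x : ℝ) (hx : 0 ≤ x) : Real.sin x ≤ x - x^3/6 + x^5/120 := by
  have hd : ∀ y : ℝ, HasDerivAt (fun z => (z - z^3/6 + z^5/120) - Real.sin z)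
      ((1 - y^2/2 + y^4/24) - Real.cos y) y := by
    intro y
    have h2 : HasDerivAt (fun z : ℝ => z - z^3/6 + z^5/120) (1 - y^2/2 + y^4/24) y := by
      have ha := ((hasDerivAt_pow 3 y).div_const 6)
      have hb := ((hasDerivAt_pow 5 y).div_const 120)
      have := ((hasDerivAt_id y).sub ha).add hb
      convert this using 1
      rfl; rfl; rfl
      norm_num; ring
    exact h2.sub (Real.hasDerivAt_sin y)
  have := nonneg_of_deriv' hd (by norm_num) (fun y hy => by
    have := cos_le_poly y hy; linarith) hx
  linarith [this]

lemma sin_ub' {x : ℝ} (a b u : ℝ) (hx : 0 ≤ a) (ha : a ≤ x) (hb : x ≤ b)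
    (h : b - a^3/6 + b^5/120 ≤ u) : Real.sin x ≤ u := by
  have h0 : 0 ≤ x := le_trans hx ha
  have hp := sin_le_poly x h0
  have h3 : a^3 ≤ x^3 := pow_le_pow_left₀ hx ha 3
  have h5 : x^5 ≤ b^5 := pow_le_pow_left₀ h0 hb 5
  linarith

lemma cos_ub' {x : ℝ} (a b u : ℝ) (hx : 0 ≤ a) (ha : a ≤ x) (hb : x ≤ b)
    (h : 1 - a^2/2 + b^4/24 ≤ u) : Real.cos x ≤ u := by
  have h0 : 0 ≤ x := le_trans hx ha
  have hp := cos_le_poly x h0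
  have h2 : a^2 ≤ x^2 := pow_le_pow_left₀ hx ha 2
  have h4 : x^4 ≤ b^4 := pow_le_pow_left₀ h0 hb 4
  linarith

lemma sin_lb' {x : ℝ} (a b lo : ℝ) (hx : 0 ≤ a) (ha : a ≤ x) (hb : x ≤ b)
    (h : lo ≤ a - b^3/6) : lo ≤ Real.sin x := by
  have h0 : 0 ≤ x := le_trans hx ha
  have hp := sin_ge_poly x h0
  have h3 : x^3 ≤ b^3 := pow_le_pow_left₀ h0 hb 3
  linarith

lemma cos_lb' {x : ℝ} (b lo : ℝ) (hb : x ≤ b) (hxn : 0 ≤ x)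
    (h : lo ≤ 1 - b^2/2) : lo ≤ Real.cos x := by
  have hp := Real.one_sub_sq_div_two_le_cos (x := x)
  have h2 : x^2 ≤ b^2 := pow_le_pow_left₀ hxn hb 2
  linarith

lemma sin_pos_of' (n k : ℕ) (hn : 2 ≤ n) (h1 : 1 ≤ k) (h2 : k ≤ n - 1) :
    0 < Real.sin (k * Real.pi / n) := by
  have hn0 : (0:ℝ) < n := by positivity
  have hk1 : (1:ℝ) ≤ (k:ℝ) := by exact_mod_cast h1
  have hkn : (k:ℝ) < (n:ℝ) := by exact_mod_cast (by omega : k < n)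
  apply Real.sin_pos_of_pos_of_lt_pi
  · positivity
  · rw [div_lt_iff₀ hn0]
    nlinarith [Real.pi_pos]

lemma U11_eq (n : ℕ) (hn : 2 ≤ n) :
    U11 n = dzero n / 2 - (∑ k ∈ Finset.Icc 1 (n-1), Real.sin (k * Real.pi / n)) / 4 := by
  unfold U11 dzero
  rw [Finset.sum_div, Finset.sum_div, ← Finset.sum_sub_distrib]
  apply Finset.sum_congr rfl
  intro k hk
  simp only [Finset.mem_Icc] at hk
  have hs := sin_pos_of' n k hn hk.1 hk.2
  set s := Real.sin (k * Real.pi / n) with hsdef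
  have hθ : (k : ℝ) * theta n = 2 * ((k:ℝ) * Real.pi / n) := by unfold theta; ring
  rw [hθ, Real.sin_two_mul, ← hsdef]
  have hc : Real.cos ((k:ℝ) * Real.pi / n) ^ 2 = 1 - s ^ 2 := Real.cos_sq' _
  unfold dk
  rw [← hsdef]
  have hs0 : s ≠ 0 := ne_of_gt hs
  field_simp
  linear_combination 4 * hc

lemma bcoef_eq (n : ℕ) (hn : 2 ≤ n) :
    bcoef n = 3 * n * ((n:ℝ)/2 - dzero n
      + (∑ k ∈ Finset.Icc 1 (n-1), Real.sin (k * Real.pi / n)) / 4) := by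
  unfold bcoef Izero Ue
  rw [U11_eq n hn]
  have hn0 : (0:ℝ) < n := by positivity
  have hr2 : (Real.sqrt n)^2 = n := Real.sq_sqrt (le_of_lt hn0)
  have hrpos : 0 < Real.sqrt n := Real.sqrt_pos.mpr hn0
  have hr0 : Real.sqrt n ≠ 0 := ne_of_gt hrpos
  set D := dzero n with hD
  set S := ∑ k ∈ Finset.Icc 1 (n-1), Real.sin (k * Real.pi / n) with hS
  rw [← hr2]
  field_simp
  rw [Real.sqrt_sq hrpos.le]
  ring

lemma sum_sin_lt (n : ℕ) (hn : 2 ≤ n) :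
    (∑ k ∈ Finset.Icc 1 (n-1), Real.sin (k * Real.pi / n)) < 2*n/Real.pi := by
  have hn0 : (0:ℝ) < n := by positivity
  have hpi := Real.pi_pos
  set t := Real.pi/(2*(n:ℝ)) with ht
  have ht0 : 0 < t := by positivity
  have hn2 : (2:ℝ) ≤ (n:ℝ) := by exact_mod_cast hn
  have htlt : t < Real.pi/2 := by
    rw [ht, div_lt_div_iff₀ (by positivity) (by norm_num)]
    nlinarith
  have hst : 0 < Real.sin t := Real.sin_pos_of_pos_of_lt_pi ht0 (by nlinarith)
  have hct : 0 < Real.cos t := Real.cos_pos_of_mem_Ioo ⟨by linarith, htlt⟩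
  have key : (∑ k ∈ Finset.Icc 1 (n-1), Real.sin (k * Real.pi / n)) * (2 * Real.sin t)
      = 2 * Real.cos t := by
    have hIcc : Finset.Icc 1 (n-1) = Finset.Ico 1 n := by
      rw [← Finset.Ico_add_one_right_eq_Icc]
      congr 1
      omega
    rw [hIcc, Finset.sum_mul, Finset.sum_Ico_eq_sum_range]
    have h1 : ∀ i : ℕ, Real.sin (((1+i : ℕ):ℝ) * Real.pi / n) * (2 * Real.sin t)
        = (fun j : ℕ => Real.cos ((2*(j:ℝ)+1)*t)) i
          - (fun j : ℕ => Real.cos ((2*(j:ℝ)+1)*t)) (i+1) := by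
      intro i
      simp only
      rw [Real.cos_sub_cos]
      have e1 : ((2*(i:ℝ)+1)*t + (2*((i:ℝ)+1)+1)*t)/2 = ((1+i : ℕ):ℝ) * Real.pi / n := by
        rw [ht]; push_cast; field_simp; ring
      have e2 : ((2*(i:ℝ)+1)*t - (2*((i:ℝ)+1)+1)*t)/2 = -t := by ring
      push_cast
      push_cast at e1
      rw [e1, e2, Real.sin_neg]
      ring
    calc ∑ i ∈ Finset.range (n-1), Real.sin (((1+i:ℕ):ℝ) * Real.pi / n) * (2 * Real.sin t)
        = ∑ i ∈ Finset.range (n-1), ((fun j : ℕ => Real.cos ((2*(j:ℝ)+1)*t)) i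
          - (fun j : ℕ => Real.cos ((2*(j:ℝ)+1)*t)) (i+1)) := by
          apply Finset.sum_congr rfl; intro i _; exact h1 i
      _ = Real.cos ((2*((0:ℕ):ℝ)+1)*t) - Real.cos ((2*((n-1:ℕ):ℝ)+1)*t) :=
          Finset.sum_range_sub' _ _
      _ = 2 * Real.cos t := by
          have hc : ((n-1:ℕ):ℝ) = (n:ℝ) - 1 := by
            rw [Nat.cast_sub (by omega)]; norm_num
          have harg : (2*((n:ℝ)-1)+1)*t = Real.pi - t := by
            rw [ht]; field_simp; ring
          rw [hc, harg, Real.cos_pi_sub]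
          ring
  have hS : (∑ k ∈ Finset.Icc 1 (n-1), Real.sin (k * Real.pi / n))
      = Real.cos t / Real.sin t := by
    rw [eq_div_iff (ne_of_gt hst)]
    linarith [key]
  rw [hS]
  have htan := Real.lt_tan ht0 htlt
  rw [Real.tan_eq_sin_div_cos, lt_div_iff₀ hct] at htan
  have h1t : Real.cos t / Real.sin t < 1 / t := by
    rw [div_lt_div_iff₀ hst ht0]
    nlinarith
  have h2t : 1/t = 2*(n:ℝ)/Real.pi := by rw [ht, one_div_div]
  linarith [h1t, h2t.le]

lemma dk_bound (n j : ℕ) (hn : 9 ≤ n) (h1 : 1 ≤ j) (h4 : j ≤ 4) :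
    (n:ℝ)/(2*j*Real.pi) ≤ 1 / dk n j := by
  have hn0 : (0:ℝ) < n := by positivity
  have hj0 : (0:ℝ) < j := by positivity
  have hpi := Real.pi_pos
  have hspos : 0 < Real.sin ((j:ℝ) * Real.pi / n) := sin_pos_of' n j (by omega) h1 (by omega)
  have hsle : Real.sin ((j:ℝ) * Real.pi / n) ≤ (j:ℝ) * Real.pi / n :=
    Real.sin_le (by positivity)
  unfold dk
  have h2 : 2 * Real.sin ((j:ℝ) * Real.pi / n) ≤ 2 * ((j:ℝ) * Real.pi / n) := by linarith
  have hrec := one_div_le_one_div_of_le (by positivity) h2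
  calc (n:ℝ)/(2*j*Real.pi) = 1 / (2 * ((j:ℝ) * Real.pi / n)) := by
        field_simp
    _ ≤ 1 / (2 * Real.sin ((j:ℝ) * Real.pi / n)) := hrec

lemma dk_eq_flip (n j : ℕ) (hj : j ≤ n) : dk n (n - j) = dk n j := by
  unfold dk
  congr 1
  have hc : ((n - j:ℕ):ℝ) = (n:ℝ) - j := by rw [Nat.cast_sub hj]
  rw [hc]
  rcases Nat.eq_zero_or_pos n with h | h
  · subst h; simp
  · have hn0 : ((n:ℝ)) ≠ 0 := by positivity
    have harg : ((n:ℝ) - j) * Real.pi / n = Real.pi - (j:ℝ) * Real.pi / n := by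
      field_simp
    rw [harg, Real.sin_pi_sub]

lemma dzero_ge (n : ℕ) (hn : 9 ≤ n) : 25/12 * ((n:ℝ)/Real.pi) ≤ dzero n := by
  have hpi := Real.pi_pos
  have hn0 : (0:ℝ) < n := by positivity
  have hT : ({1,2,3,4,n-4,n-3,n-2,n-1} : Finset ℕ) ⊆ Finset.Icc 1 (n-1) := by
    intro k hk
    simp only [Finset.mem_insert, Finset.mem_singleton] at hk
    simp only [Finset.mem_Icc]
    omega
  have hnonneg : ∀ k ∈ Finset.Icc 1 (n-1), 0 ≤ 1 / dk n k := by
    intro k hk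
    simp only [Finset.mem_Icc] at hk
    have := sin_pos_of' n k (by omega) hk.1 hk.2
    unfold dk
    positivity
  have hsub : ∑ k ∈ ({1,2,3,4,n-4,n-3,n-2,n-1} : Finset ℕ), 1 / dk n k ≤ dzero n := by
    unfold dzero
    apply Finset.sum_le_sum_of_subset_of_nonneg hT
    intro k hk _
    exact hnonneg k hk
  have hexp : ∑ k ∈ ({1,2,3,4,n-4,n-3,n-2,n-1} : Finset ℕ), 1 / dk n k
      = 1/dk n 1 + 1/dk n 2 + 1/dk n 3 + 1/dk n 4
        + 1/dk n (n-4) + 1/dk n (n-3) + 1/dk n (n-2) + 1/dk n (n-1) := by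
    rw [Finset.sum_insert (by simp; omega), Finset.sum_insert (by simp; omega),
        Finset.sum_insert (by simp; omega), Finset.sum_insert (by simp; omega),
        Finset.sum_insert (by simp; omega), Finset.sum_insert (by simp; omega),
        Finset.sum_insert (by simp; omega), Finset.sum_singleton]
    ring
  have b1 := dk_bound n 1 hn (by omega) (by omega)
  have b2 := dk_bound n 2 hn (by omega) (by omega)
  have b3 := dk_bound n 3 hn (by omega) (by omega)
  have b4 := dk_bound n 4 hn (by omega) (by omega)
  have f1 : 1/dk n (n-1) = 1/dk n 1 := by rw [dk_eq_flip n 1 (by omega)]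
  have f2 : 1/dk n (n-2) = 1/dk n 2 := by rw [dk_eq_flip n 2 (by omega)]
  have f3 : 1/dk n (n-3) = 1/dk n 3 := by rw [dk_eq_flip n 3 (by omega)]
  have f4 : 1/dk n (n-4) = 1/dk n 4 := by rw [dk_eq_flip n 4 (by omega)]
  have hval : (25:ℝ)/12 * ((n:ℝ)/Real.pi)
      = 2*((n:ℝ)/(2*1*Real.pi)) + 2*((n:ℝ)/(2*2*Real.pi))
        + 2*((n:ℝ)/(2*3*Real.pi)) + 2*((n:ℝ)/(2*4*Real.pi)) := by
    field_simp
    ring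
  rw [hval]
  rw [hexp, f1, f2, f3, f4] at hsub
  push_cast at b1 b2 b3 b4 ⊢
  linarith

lemma bcoef_neg_of_ge9 (n : ℕ) (hn : 9 ≤ n) : bcoef n < 0 := by
  rw [bcoef_eq n (by omega)]
  have hpi := Real.pi_pos
  have hn0 : (0:ℝ) < n := by
    have : (9:ℝ) ≤ (n:ℝ) := by exact_mod_cast hn
    linarith
  apply mul_neg_of_pos_of_neg (by positivity)
  have hd := dzero_ge n hn
  have hs := sum_sin_lt n (by omega)
  have hπu : Real.pi < 3.15 := by
    have := Real.pi_lt_d2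
    linarith
  have hQ : ((n:ℝ)/Real.pi) * Real.pi = n := by field_simp
  have hQpos : 0 < (n:ℝ)/Real.pi := by positivity
  have hlt : (n:ℝ) < 19/6 * ((n:ℝ)/Real.pi) := by nlinarith
  have hs' : (∑ k ∈ Finset.Icc 1 (n-1), Real.sin (k * Real.pi / n))
      < 2 * ((n:ℝ)/Real.pi) := by
    have : 2*(n:ℝ)/Real.pi = 2 * ((n:ℝ)/Real.pi) := by ring
    linarith [hs, this.le]
  linarith


lemma bcoef_pos3 : 0 < bcoef 3 := by
  rw [bcoef_eq 3 (by norm_num)]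
  push_cast
  have hd : dzero 3 = 1/(2*Real.sin (Real.pi/3)) + 1/(2*Real.sin (2*Real.pi/3)) := by
    unfold dzero dk
    rw [show Finset.Icc 1 (3-1) = ({1,2} : Finset ℕ) from by decide]
    rw [Finset.sum_insert (by decide),
      Finset.sum_singleton]
    push_cast
    try norm_num
    try ring
  have hsum : (∑ k ∈ Finset.Icc (1:ℕ) (3-1), Real.sin ((k:ℝ) * Real.pi / 3)) = Real.sin (Real.pi/3) + Real.sin (2*Real.pi/3) := by
    rw [show Finset.Icc 1 (3-1) = ({1,2} : Finset ℕ) from by decide]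
    rw [Finset.sum_insert (by decide),
      Finset.sum_singleton]
    push_cast
    try norm_num
    try ring
  rw [hd, hsum]
  have m2 : Real.sin (2*Real.pi/3) = Real.sin (Real.pi/3) := by
    rw [show (2:ℝ)*Real.pi/3 = Real.pi - Real.pi/3 by ring, Real.sin_pi_sub]
  rw [m2, Real.sin_pi_div_three]
  have h3 : Real.sqrt 3 ^ 2 = 3 := Real.sq_sqrt (by norm_num)
  have hpos : 0 < Real.sqrt 3 := Real.sqrt_pos.mpr (by norm_num)
  have hub : Real.sqrt 3 ≤ 1.7320509 := by nlinarith
  have hinv : (1:ℝ)/(2*(Real.sqrt 3/2)) = Real.sqrt 3 / 3 := by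
    rw [div_eq_div_iff (by positivity) (by norm_num)]
    nlinarith
  rw [hinv]
  apply mul_pos (by norm_num)
  try push_cast
  linarith

lemma bcoef_pos4 : 0 < bcoef 4 := by
  rw [bcoef_eq 4 (by norm_num)]
  push_cast
  have hd : dzero 4 = 1/(2*Real.sin (Real.pi/4)) + 1/(2*Real.sin (2*Real.pi/4)) + 1/(2*Real.sin (3*Real.pi/4)) := by
    unfold dzero dk
    rw [show Finset.Icc 1 (4-1) = ({1,2,3} : Finset ℕ) from by decide]
    rw [Finset.sum_insert (by decide),
      Finset.sum_insert (by decide),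
      Finset.sum_singleton]
    push_cast
    try norm_num
    try ring
  have hsum : (∑ k ∈ Finset.Icc (1:ℕ) (4-1), Real.sin ((k:ℝ) * Real.pi / 4)) = Real.sin (Real.pi/4) + Real.sin (2*Real.pi/4) + Real.sin (3*Real.pi/4) := by
    rw [show Finset.Icc 1 (4-1) = ({1,2,3} : Finset ℕ) from by decide]
    rw [Finset.sum_insert (by decide),
      Finset.sum_insert (by decide),
      Finset.sum_singleton]
    push_cast
    try norm_num
    try ring
  rw [hd, hsum]
  have m2 : Real.sin (2*Real.pi/4) = 1 := by
    rw [show (2:ℝ)*Real.pi/4 = Real.pi/2 by ring, Real.sin_pi_div_two]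
  have m3 : Real.sin (3*Real.pi/4) = Real.sin (Real.pi/4) := by
    rw [show (3:ℝ)*Real.pi/4 = Real.pi - Real.pi/4 by ring, Real.sin_pi_sub]
  rw [m2, m3, Real.sin_pi_div_four]
  have h2 : Real.sqrt 2 ^ 2 = 2 := Real.sq_sqrt (by norm_num)
  have hpos : 0 < Real.sqrt 2 := Real.sqrt_pos.mpr (by norm_num)
  have hub : Real.sqrt 2 ≤ 1.4142136 := by nlinarith
  have hinv : (1:ℝ)/(2*(Real.sqrt 2/2)) = Real.sqrt 2 / 2 := by
    rw [div_eq_div_iff (by positivity) (by norm_num)]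
    nlinarith
  rw [hinv]
  apply mul_pos (by norm_num)
  try push_cast
  linarith

lemma bcoef_pos6 : 0 < bcoef 6 := by
  rw [bcoef_eq 6 (by norm_num)]
  push_cast
  have hd : dzero 6 = 1/(2*Real.sin (Real.pi/6)) + 1/(2*Real.sin (2*Real.pi/6)) + 1/(2*Real.sin (3*Real.pi/6)) + 1/(2*Real.sin (4*Real.pi/6)) + 1/(2*Real.sin (5*Real.pi/6)) := by
    unfold dzero dk
    rw [show Finset.Icc 1 (6-1) = ({1,2,3,4,5} : Finset ℕ) from by decide]
    rw [Finset.sum_insert (by decide),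
      Finset.sum_insert (by decide),
      Finset.sum_insert (by decide),
      Finset.sum_insert (by decide),
      Finset.sum_singleton]
    push_cast
    try norm_num
    try ring
  have hsum : (∑ k ∈ Finset.Icc (1:ℕ) (6-1), Real.sin ((k:ℝ) * Real.pi / 6)) = Real.sin (Real.pi/6) + Real.sin (2*Real.pi/6) + Real.sin (3*Real.pi/6) + Real.sin (4*Real.pi/6) + Real.sin (5*Real.pi/6) := by
    rw [show Finset.Icc 1 (6-1) = ({1,2,3,4,5} : Finset ℕ) from by decide]
    rw [Finset.sum_insert (by decide),
      Finset.sum_insert (by decide),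
      Finset.sum_insert (by decide),
      Finset.sum_insert (by decide),
      Finset.sum_singleton]
    push_cast
    try norm_num
    try ring
  rw [hd, hsum]
  have m2 : Real.sin (2*Real.pi/6) = Real.sin (Real.pi/3) := by
    rw [show (2:ℝ)*Real.pi/6 = Real.pi/3 by ring]
  have m3 : Real.sin (3*Real.pi/6) = 1 := by
    rw [show (3:ℝ)*Real.pi/6 = Real.pi/2 by ring, Real.sin_pi_div_two]
  have m4 : Real.sin (4*Real.pi/6) = Real.sin (Real.pi/3) := by
    rw [show (4:ℝ)*Real.pi/6 = Real.pi - Real.pi/3 by ring, Real.sin_pi_sub]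
  have m5 : Real.sin (5*Real.pi/6) = Real.sin (Real.pi/6) := by
    rw [show (5:ℝ)*Real.pi/6 = Real.pi - Real.pi/6 by ring, Real.sin_pi_sub]
  rw [m2, m3, m4, m5, Real.sin_pi_div_three, Real.sin_pi_div_six]
  have h3 : Real.sqrt 3 ^ 2 = 3 := Real.sq_sqrt (by norm_num)
  have hpos : 0 < Real.sqrt 3 := Real.sqrt_pos.mpr (by norm_num)
  have hub : Real.sqrt 3 ≤ 1.7320509 := by nlinarith
  have hinv : (1:ℝ)/(2*(Real.sqrt 3/2)) = Real.sqrt 3 / 3 := by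
    rw [div_eq_div_iff (by positivity) (by norm_num)]
    nlinarith
  rw [hinv]
  apply mul_pos (by norm_num)
  try push_cast
  norm_num
  linarith

lemma bcoef_pos5 : 0 < bcoef 5 := by
  rw [bcoef_eq 5 (by norm_num)]
  push_cast
  have hd : dzero 5 = 1/(2*Real.sin (Real.pi/5)) + 1/(2*Real.sin (2*Real.pi/5)) + 1/(2*Real.sin (3*Real.pi/5)) + 1/(2*Real.sin (4*Real.pi/5)) := by
    unfold dzero dk
    rw [show Finset.Icc 1 (5-1) = ({1,2,3,4} : Finset ℕ) from by decide]
    rw [Finset.sum_insert (by decide),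
      Finset.sum_insert (by decide),
      Finset.sum_insert (by decide),
      Finset.sum_singleton]
    push_cast
    try norm_num
    try ring
  have hsum : (∑ k ∈ Finset.Icc (1:ℕ) (5-1), Real.sin ((k:ℝ) * Real.pi / 5)) = Real.sin (Real.pi/5) + Real.sin (2*Real.pi/5) + Real.sin (3*Real.pi/5) + Real.sin (4*Real.pi/5) := by
    rw [show Finset.Icc 1 (5-1) = ({1,2,3,4} : Finset ℕ) from by decide]
    rw [Finset.sum_insert (by decide),
      Finset.sum_insert (by decide),
      Finset.sum_insert (by decide),
      Finset.sum_singleton]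
    push_cast
    try norm_num
    try ring
  rw [hd, hsum]
  have hπl : 3.141592 < Real.pi := Real.pi_gt_d6
  have hπu : Real.pi < 3.141593 := Real.pi_lt_d6
  have m2 : Real.sin (2*Real.pi/5) = Real.cos (Real.pi/10) := by
    rw [show (2:ℝ)*Real.pi/5 = Real.pi/2 - Real.pi/10 by ring, Real.sin_pi_div_two_sub]
  have m3 : Real.sin (3*Real.pi/5) = Real.cos (Real.pi/10) := by
    rw [show (3:ℝ)*Real.pi/5 = Real.pi - 2*Real.pi/5 by ring, Real.sin_pi_sub, m2]
  have m4 : Real.sin (4*Real.pi/5) = Real.sin (Real.pi/5) := by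
    rw [show (4:ℝ)*Real.pi/5 = Real.pi - Real.pi/5 by ring, Real.sin_pi_sub]
  rw [m2, m3, m4]
  have l1 : (0.58697668:ℝ) ≤ Real.sin (Real.pi/5) :=
    sin_lb' 0.6283184 0.6283186 _ (by norm_num) (by linarith) (by linarith) (by norm_num)
  have l2 : (0.95065196:ℝ) ≤ Real.cos (Real.pi/10) :=
    cos_lb' 0.3141593 _ (by linarith) (by positivity) (by norm_num)
  have r1 : 1/(2*Real.sin (Real.pi/5)) ≤ 1/(2*(0.58697668:ℝ)) :=
    one_div_le_one_div_of_le (by norm_num) (by linarith)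
  have r2 : 1/(2*Real.cos (Real.pi/10)) ≤ 1/(2*(0.95065196:ℝ)) :=
    one_div_le_one_div_of_le (by norm_num) (by linarith)
  apply mul_pos (by norm_num)
  try push_cast
  linarith

lemma bcoef_neg7 : bcoef 7 < 0 := by
  rw [bcoef_eq 7 (by norm_num)]
  push_cast
  have hd : dzero 7 = 1/(2*Real.sin (Real.pi/7)) + 1/(2*Real.sin (2*Real.pi/7)) + 1/(2*Real.sin (3*Real.pi/7)) + 1/(2*Real.sin (4*Real.pi/7)) + 1/(2*Real.sin (5*Real.pi/7)) + 1/(2*Real.sin (6*Real.pi/7)) := by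
    unfold dzero dk
    rw [show Finset.Icc 1 (7-1) = ({1,2,3,4,5,6} : Finset ℕ) from by decide]
    rw [Finset.sum_insert (by decide),
      Finset.sum_insert (by decide),
      Finset.sum_insert (by decide),
      Finset.sum_insert (by decide),
      Finset.sum_insert (by decide),
      Finset.sum_singleton]
    push_cast
    try norm_num
    try ring
  have hsum : (∑ k ∈ Finset.Icc (1:ℕ) (7-1), Real.sin ((k:ℝ) * Real.pi / 7)) = Real.sin (Real.pi/7) + Real.sin (2*Real.pi/7) + Real.sin (3*Real.pi/7) + Real.sin (4*Real.pi/7) + Real.sin (5*Real.pi/7) + Real.sin (6*Real.pi/7) := by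
    rw [show Finset.Icc 1 (7-1) = ({1,2,3,4,5,6} : Finset ℕ) from by decide]
    rw [Finset.sum_insert (by decide),
      Finset.sum_insert (by decide),
      Finset.sum_insert (by decide),
      Finset.sum_insert (by decide),
      Finset.sum_insert (by decide),
      Finset.sum_singleton]
    push_cast
    try norm_num
    try ring
  rw [hd, hsum]
  have hπl : 3.141592 < Real.pi := Real.pi_gt_d6
  have hπu : Real.pi < 3.141593 := Real.pi_lt_d6
  have m2 : Real.sin (2*Real.pi/7) = Real.cos (3*Real.pi/14) := by
    rw [show (2:ℝ)*Real.pi/7 = Real.pi/2 - 3*Real.pi/14 by ring, Real.sin_pi_div_two_sub]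
  have m3 : Real.sin (3*Real.pi/7) = Real.cos (Real.pi/14) := by
    rw [show (3:ℝ)*Real.pi/7 = Real.pi/2 - Real.pi/14 by ring, Real.sin_pi_div_two_sub]
  have m4 : Real.sin (4*Real.pi/7) = Real.cos (Real.pi/14) := by
    rw [show (4:ℝ)*Real.pi/7 = Real.pi - 3*Real.pi/7 by ring, Real.sin_pi_sub, m3]
  have m5 : Real.sin (5*Real.pi/7) = Real.cos (3*Real.pi/14) := by
    rw [show (5:ℝ)*Real.pi/7 = Real.pi - 2*Real.pi/7 by ring, Real.sin_pi_sub, m2]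
  have m6 : Real.sin (6*Real.pi/7) = Real.sin (Real.pi/7) := by
    rw [show (6:ℝ)*Real.pi/7 = Real.pi - Real.pi/7 by ring, Real.sin_pi_sub]
  rw [m2, m3, m4, m5, m6]
  have u1 : Real.sin (Real.pi/7) ≤ (0.43388453:ℝ) :=
    sin_ub' 0.4487988 0.4487990 _ (by norm_num) (by linarith) (by linarith) (by norm_num)
  have u2 : Real.cos (3*Real.pi/14) ≤ (0.78195988:ℝ) :=
    cos_ub' 0.6731982 0.6731985 _ (by norm_num) (by linarith) (by linarith) (by norm_num)
  have u3 : Real.cos (Real.pi/14) ≤ (0.97492811:ℝ) :=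
    cos_ub' 0.2243994 0.2243995 _ (by norm_num) (by linarith) (by linarith) (by norm_num)
  have p1 : 0 < Real.sin (Real.pi/7) :=
    Real.sin_pos_of_pos_of_lt_pi (by positivity) (by linarith)
  have p2 : 0 < Real.cos (3*Real.pi/14) :=
    Real.cos_pos_of_mem_Ioo ⟨by linarith, by linarith⟩
  have p3 : 0 < Real.cos (Real.pi/14) :=
    Real.cos_pos_of_mem_Ioo ⟨by linarith, by linarith⟩
  have r1 : 1/(2*(0.43388453:ℝ)) ≤ 1/(2*Real.sin (Real.pi/7)) :=
    one_div_le_one_div_of_le (by linarith) (by linarith)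
  have r2 : 1/(2*(0.78195988:ℝ)) ≤ 1/(2*Real.cos (3*Real.pi/14)) :=
    one_div_le_one_div_of_le (by linarith) (by linarith)
  have r3 : 1/(2*(0.97492811:ℝ)) ≤ 1/(2*Real.cos (Real.pi/14)) :=
    one_div_le_one_div_of_le (by linarith) (by linarith)
  apply mul_neg_of_pos_of_neg (by norm_num)
  try push_cast
  linarith

lemma bcoef_neg8 : bcoef 8 < 0 := by
  rw [bcoef_eq 8 (by norm_num)]
  push_cast
  have hd : dzero 8 = 1/(2*Real.sin (Real.pi/8)) + 1/(2*Real.sin (2*Real.pi/8)) + 1/(2*Real.sin (3*Real.pi/8)) + 1/(2*Real.sin (4*Real.pi/8)) + 1/(2*Real.sin (5*Real.pi/8)) + 1/(2*Real.sin (6*Real.pi/8)) + 1/(2*Real.sin (7*Real.pi/8)) := by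
    unfold dzero dk
    rw [show Finset.Icc 1 (8-1) = ({1,2,3,4,5,6,7} : Finset ℕ) from by decide]
    rw [Finset.sum_insert (by decide),
      Finset.sum_insert (by decide),
      Finset.sum_insert (by decide),
      Finset.sum_insert (by decide),
      Finset.sum_insert (by decide),
      Finset.sum_insert (by decide),
      Finset.sum_singleton]
    push_cast
    try norm_num
    try ring
  have hsum : (∑ k ∈ Finset.Icc (1:ℕ) (8-1), Real.sin ((k:ℝ) * Real.pi / 8)) = Real.sin (Real.pi/8) + Real.sin (2*Real.pi/8) + Real.sin (3*Real.pi/8) + Real.sin (4*Real.pi/8) + Real.sin (5*Real.pi/8) + Real.sin (6*Real.pi/8) + Real.sin (7*Real.pi/8) := by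
    rw [show Finset.Icc 1 (8-1) = ({1,2,3,4,5,6,7} : Finset ℕ) from by decide]
    rw [Finset.sum_insert (by decide),
      Finset.sum_insert (by decide),
      Finset.sum_insert (by decide),
      Finset.sum_insert (by decide),
      Finset.sum_insert (by decide),
      Finset.sum_insert (by decide),
      Finset.sum_singleton]
    push_cast
    try norm_num
    try ring
  rw [hd, hsum]
  have hπl : 3.141592 < Real.pi := Real.pi_gt_d6
  have hπu : Real.pi < 3.141593 := Real.pi_lt_d6
  have m2 : Real.sin (2*Real.pi/8) = Real.sqrt 2 / 2 := by
    rw [show (2:ℝ)*Real.pi/8 = Real.pi/4 by ring, Real.sin_pi_div_four]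
  have m3 : Real.sin (3*Real.pi/8) = Real.cos (Real.pi/8) := by
    rw [show (3:ℝ)*Real.pi/8 = Real.pi/2 - Real.pi/8 by ring, Real.sin_pi_div_two_sub]
  have m4 : Real.sin (4*Real.pi/8) = 1 := by
    rw [show (4:ℝ)*Real.pi/8 = Real.pi/2 by ring, Real.sin_pi_div_two]
  have m5 : Real.sin (5*Real.pi/8) = Real.cos (Real.pi/8) := by
    rw [show (5:ℝ)*Real.pi/8 = Real.pi - 3*Real.pi/8 by ring, Real.sin_pi_sub, m3]
  have m6 : Real.sin (6*Real.pi/8) = Real.sqrt 2 / 2 := by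
    rw [show (6:ℝ)*Real.pi/8 = Real.pi - 2*Real.pi/8 by ring, Real.sin_pi_sub, m2]
  have m7 : Real.sin (7*Real.pi/8) = Real.sin (Real.pi/8) := by
    rw [show (7:ℝ)*Real.pi/8 = Real.pi - Real.pi/8 by ring, Real.sin_pi_sub]
  rw [m2, m3, m4, m5, m6, m7]
  have h2 : Real.sqrt 2 ^ 2 = 2 := Real.sq_sqrt (by norm_num)
  have hqpos : 0 < Real.sqrt 2 := Real.sqrt_pos.mpr (by norm_num)
  have hqub : Real.sqrt 2 ≤ 1.41421358 := by nlinarith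
  have hqlb : 1.41421356 ≤ Real.sqrt 2 := by nlinarith
  have u1 : Real.sin (Real.pi/8) ≤ (0.38268385:ℝ) :=
    sin_ub' 0.3926990 0.3926992 _ (by norm_num) (by linarith) (by linarith) (by norm_num)
  have u3 : Real.cos (Real.pi/8) ≤ (0.92388465:ℝ) :=
    cos_ub' 0.3926990 0.3926992 _ (by norm_num) (by linarith) (by linarith) (by norm_num)
  have p1 : 0 < Real.sin (Real.pi/8) :=
    Real.sin_pos_of_pos_of_lt_pi (by positivity) (by linarith)
  have p3 : 0 < Real.cos (Real.pi/8) :=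
    Real.cos_pos_of_mem_Ioo ⟨by linarith, by linarith⟩
  have r1 : 1/(2*(0.38268385:ℝ)) ≤ 1/(2*Real.sin (Real.pi/8)) :=
    one_div_le_one_div_of_le (by linarith) (by linarith)
  have r2 : 1/(2*(0.70710679:ℝ)) ≤ 1/(2*(Real.sqrt 2/2)) :=
    one_div_le_one_div_of_le (by linarith) (by linarith)
  have r3 : 1/(2*(0.92388465:ℝ)) ≤ 1/(2*Real.cos (Real.pi/8)) :=
    one_div_le_one_div_of_le (by linarith) (by linarith)
  apply mul_neg_of_pos_of_neg (by norm_num)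
  try push_cast
  linarith

/-- b_n > 0 for 3 ≤ n ≤ 6, and b_n < 0 for n ≥ 7. -/
theorem bcoef_sign :
    (∀ n : ℕ, 3 ≤ n → n ≤ 6 → 0 < bcoef n) ∧ (∀ n : ℕ, 7 ≤ n → bcoef n < 0) := by
  constructor
  · intro n h3 h6
    interval_cases n
    · exact bcoef_pos3
    · exact bcoef_pos4
    · exact bcoef_pos5
    · exact bcoef_pos6
  · intro n h7
    rcases Nat.lt_or_ge n 9 with h | h
    · interval_cases n
      · exact bcoef_neg7
      · exact bcoef_neg8
    · exact bcoef_neg_of_ge9 n h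

end
end

section
/- For every integer n with 3 ≤ n ≤ 6, there exists exactly one positive real number m such that b_n m² + c_n m + d_n = 0; equivalently, there is exactly one m > 0 at which the l = 1 block A₁(m) is singular (det A₁(m) = 0). -/
open Real Finset

noncomputable section

/-- Q coefficients: det A1 = m * (Aq m^2 + Bq m + Cq) / (s * n) -/
def Aq (n : ℕ) : ℝ := -3 * (n:ℝ)^4 + 6 * U11 n * (n:ℝ)^3 + 6 * Ue n * (n:ℝ)^2
def Bq (n : ℕ) : ℝ := (3/2) * U11 n * (n:ℝ)^4 - (3/2) * Ue n * (n:ℝ)^3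
  + 10 * Ue n * U11 n * (n:ℝ)^2 + 8 * Ue n^2 * (n:ℝ)
def Cq (n : ℕ) : ℝ := Ue n * U11 n * (n:ℝ)^3 + (1/2) * Ue n^2 * (n:ℝ)^2
  + 4 * Ue n^2 * U11 n * (n:ℝ) + 2 * Ue n^3

lemma det_A1 (n : ℕ) (hn : 0 < n) (m : ℝ) :
    (A1block n m).det
      = ((m * (Aq n * m ^ 2 + Bq n * m + Cq n) / (Real.sqrt n * n) : ℝ) : ℂ) := by
  have hnR : (0:ℝ) < n := Nat.cast_pos.mpr hn
  have hs2 : Real.sqrt n ^ 2 = (n:ℝ) := Real.sq_sqrt hnR.le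
  have hs0 : Real.sqrt n ≠ 0 := by positivity
  have hsC : ((Real.sqrt n : ℝ) : ℂ) ≠ 0 := by exact_mod_cast hs0
  have hnC : ((n:ℝ) : ℂ) ≠ 0 := by exact_mod_cast hnR.ne'
  have hs2C : ((Real.sqrt n : ℝ) : ℂ) ^ 2 = ((n:ℝ) : ℂ) := by exact_mod_cast hs2
  have h01 : -Complex.I * ((Real.sqrt n : ℝ):ℂ) * U11' n
      = ((-(Real.sqrt n * U11 n) : ℝ) : ℂ) := by
    rw [U11', U12]; push_cast
    linear_combination ((Real.sqrt n:ℝ):ℂ) * ((U11 n:ℝ):ℂ) * Complex.I_sq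
  have h10 : Complex.I * ((Real.sqrt n : ℝ):ℂ) * U12 n
      = ((-(Real.sqrt n * U11 n) : ℝ) : ℂ) := by
    rw [U12]; push_cast
    linear_combination ((Real.sqrt n:ℝ):ℂ) * ((U11 n:ℝ):ℂ) * Complex.I_sq
  simp only [A1block, Matrix.det_fin_three, Matrix.of_apply, Matrix.cons_val', Matrix.cons_val_zero,
    Matrix.cons_val_one, Matrix.head_cons, Matrix.empty_val', Matrix.cons_val_fin_one,
    Matrix.cons_val_two, Matrix.tail_cons, Matrix.head_fin_const, Izero, U12']
  rw [h01, h10]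
  have H : ((Uzero n m)/Real.sqrt n + Real.sqrt n*(U11 n + 2*m)) *
        (((Uzero n m)/Real.sqrt n + Real.sqrt n*(U11 n - m)) * (2*(Uzero n m)*m/Real.sqrt n + Real.sqrt n*n*m/2)
          - (Real.sqrt n*m) * (Real.sqrt n*n*m))
      - (-(Real.sqrt n * U11 n)) *
        ((-(Real.sqrt n * U11 n)) * (2*(Uzero n m)*m/Real.sqrt n + Real.sqrt n*n*m/2)
          - (Real.sqrt n*m) * (-(Real.sqrt n)*n*m))
      + (-2*(Real.sqrt n)*m) *
        ((-(Real.sqrt n * U11 n)) * (Real.sqrt n*n*m)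
          - ((Uzero n m)/Real.sqrt n + Real.sqrt n*(U11 n - m)) * (-(Real.sqrt n)*n*m))
      = m * (Aq n * m ^ 2 + Bq n * m + Cq n) / (Real.sqrt n * n) := by
    rw [Uzero, Aq, Bq, Cq]
    have hs2' := hs2
    have hs0' := hs0
    generalize Real.sqrt n = s at hs2' hs0' ⊢
    rw [← hs2']
    field_simp
    ring
  rw [← H]
  push_cast
  ring

lemma quad_unique (a b c : ℝ) (ha : 0 < a) (hc : c < 0) :
    ∃! x : ℝ, 0 < x ∧ a * x ^ 2 + b * x + c = 0 := by
  set D : ℝ := b ^ 2 - 4 * a * c with hD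
  have hDpos : 0 < D := by nlinarith [sq_nonneg b]
  have hsD : Real.sqrt D ^ 2 = D := Real.sq_sqrt hDpos.le
  have hsDb : b < Real.sqrt D := by
    nlinarith [Real.sqrt_nonneg D, sq_nonneg (Real.sqrt D - b)]
  set x₀ : ℝ := (-b + Real.sqrt D) / (2 * a) with hx₀
  have hx₀pos : 0 < x₀ := by
    apply div_pos (by linarith) (by linarith)
  have hroot : a * x₀ ^ 2 + b * x₀ + c = 0 := by
    rw [hx₀]; field_simp
    nlinarith [hsD]
  refine ⟨x₀, ⟨hx₀pos, hroot⟩, ?_⟩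
  rintro y ⟨hy, hyr⟩
  have hfac : a * (y - x₀) * (y + x₀ + b / a) = 0 := by
    field_simp
    nlinarith [hroot, hyr]
  have h2 : y + x₀ + b / a > 0 := by
    have : x₀ * (x₀ + b / a) = -c / a := by
      field_simp
      nlinarith [hroot]
    have hpos : x₀ + b / a > 0 := by
      nlinarith [mul_pos hx₀pos (div_pos (neg_pos.mpr hc) ha)]
    linarith
  rcases mul_eq_zero.mp hfac with h | h
  · rcases mul_eq_zero.mp h with h' | h'
    · exact absurd h' ha.ne'
    · linarith
  · linarith

lemma main_aux (n : ℕ) (hn : 0 < n) (hU : 0 < Ue n) (hV : 0 ≤ U11 n)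
    (hE : Ue n + n * U11 n < (n:ℝ) ^ 2 / 2) :
    (∃! m : ℝ, 0 < m ∧ bcoef n * m ^ 2 + ccoef n * m + dcoef n = 0)
    ∧ (∃! m : ℝ, 0 < m ∧ (A1block n m).det = 0) := by
  have hnR : (0:ℝ) < n := Nat.cast_pos.mpr hn
  have hs2 : Real.sqrt n ^ 2 = (n:ℝ) := Real.sq_sqrt hnR.le
  have hs0 : Real.sqrt n ≠ 0 := by positivity
  have hb : bcoef n = 3 * ((n:ℝ) ^ 2 / 2 - Ue n - n * U11 n) := by
    rw [bcoef, Izero]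
    have hs2' := hs2; have hs0' := hs0
    generalize Real.sqrt n = s at hs2' hs0' ⊢
    rw [← hs2']; field_simp
  have hd : dcoef n = -((n:ℝ)/2 + Ue n/n) * (Ue n ^ 2 / n + 2 * Ue n * U11 n) := by
    rw [dcoef, Izero]
    have hs2' := hs2; have hs0' := hs0
    generalize Real.sqrt n = s at hs2' hs0' ⊢
    rw [← hs2']
  have hbpos : 0 < bcoef n := by rw [hb]; nlinarith
  have hdneg : dcoef n < 0 := by
    rw [hd]
    have h1 : 0 < (n:ℝ)/2 + Ue n/n := by positivity
    have h2 : 0 < Ue n ^ 2 / n + 2 * Ue n * U11 n := by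
      have := div_pos (pow_pos hU 2) hnR
      nlinarith
    nlinarith
  constructor
  · exact quad_unique _ _ _ hbpos hdneg
  · have hA : 0 < -Aq n := by
      rw [Aq]
      nlinarith [mul_lt_mul_of_pos_left hE (by positivity : (0:ℝ) < 6 * (n:ℝ) ^ 2)]
    have hC : -Cq n < 0 := by
      rw [Cq]
      nlinarith [pow_pos hU 3, mul_pos (pow_pos hU 2) (pow_pos hnR 2),
        mul_nonneg (mul_nonneg hU.le hV) (pow_pos hnR 3).le,
        mul_nonneg (mul_nonneg (pow_pos hU 2).le hV) hnR.le]
    have key : ∀ m : ℝ, 0 < m →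
        ((A1block n m).det = 0 ↔ (-Aq n) * m ^ 2 + (-Bq n) * m + (-Cq n) = 0) := by
      intro m hm
      rw [det_A1 n hn m, Complex.ofReal_eq_zero, div_eq_zero_iff]
      constructor
      · rintro (h | h)
        · rcases mul_eq_zero.mp h with h' | h'
          · exact absurd h' hm.ne'
          · linear_combination -h'
        · exact absurd h (by positivity)
      · intro h
        left
        linear_combination (-m) * h
    obtain ⟨x, ⟨hx, hxe⟩, hu⟩ := quad_unique (-Aq n) (-Bq n) (-Cq n) hA hC
    exact ⟨x, ⟨hx, (key x hx).mpr hxe⟩,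
      fun y hy => hu y ⟨hy.1, (key y hy.1).mp hy.2⟩⟩

lemma dk_pos {n k : ℕ} (hn : 2 ≤ n) (hk : k ∈ Finset.Icc 1 (n - 1)) : 0 < dk n k := by
  simp only [Finset.mem_Icc] at hk
  have hnR : (0:ℝ) < n := by exact_mod_cast (by omega : 0 < n)
  have hk1 : (1:ℝ) ≤ (k:ℝ) := by exact_mod_cast hk.1
  have hkn : (k:ℝ) < (n:ℝ) := by exact_mod_cast (by omega : k < n)
  apply mul_pos two_pos
  apply Real.sin_pos_of_pos_of_lt_pi
  · positivity
  · rw [div_lt_iff₀ hnR]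
    nlinarith [Real.pi_pos]

lemma Ue_pos {n : ℕ} (hn : 2 ≤ n) : 0 < Ue n := by
  rw [Ue]
  have hnR : (0:ℝ) < n := by exact_mod_cast (by omega : 0 < n)
  have hd : 0 < dzero n := by
    rw [dzero]
    apply Finset.sum_pos
    · intro k hk
      exact div_pos one_pos (dk_pos hn hk)
    · exact ⟨1, Finset.mem_Icc.mpr ⟨le_refl 1, by omega⟩⟩
  positivity

lemma U11_nonneg {n : ℕ} (hn : 2 ≤ n) : 0 ≤ U11 n := by
  rw [U11]
  apply Finset.sum_nonneg
  intro k hk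
  have := dk_pos hn hk
  positivity


lemma sqrt3_sq : Real.sqrt 3 ^ 2 = 3 := Real.sq_sqrt (by norm_num)
lemma sqrt3_pos : (0:ℝ) < Real.sqrt 3 := Real.sqrt_pos.mpr (by norm_num)
lemma sqrt2_sq : Real.sqrt 2 ^ 2 = 2 := Real.sq_sqrt (by norm_num)
lemma sqrt2_pos : (0:ℝ) < Real.sqrt 2 := Real.sqrt_pos.mpr (by norm_num)

lemma sqrt3_pows : Real.sqrt 3 ^ 3 = 3 * Real.sqrt 3 ∧ Real.sqrt 3 ^ 4 = 9 ∧
    Real.sqrt 3 ^ 5 = 9 * Real.sqrt 3 ∧ Real.sqrt 3 ^ 6 = 27 := by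
  have h := sqrt3_sq
  exact ⟨by linear_combination Real.sqrt 3 * h,
    by linear_combination (Real.sqrt 3 ^ 2 + 3) * h,
    by linear_combination (Real.sqrt 3 ^ 3 + 3 * Real.sqrt 3) * h,
    by linear_combination (Real.sqrt 3 ^ 4 + 3 * Real.sqrt 3 ^ 2 + 9) * h⟩

lemma Ue3 : Ue 3 = Real.sqrt 3 := by
  rw [Ue, dzero, show Finset.Icc 1 (3-1) = {1, 2} from rfl, Finset.sum_pair (by norm_num),
    dk, dk]
  push_cast
  rw [show (1:ℝ) * π / 3 = π/3 by ring, show (2:ℝ) * π / 3 = π - π/3 by ring,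
    Real.sin_pi_sub, Real.sin_pi_div_three]
  have h0 := sqrt3_pos
  field_simp
  nlinarith [sqrt3_sq]

lemma U113 : U11 3 = Real.sqrt 3 / 12 := by
  rw [U11, show Finset.Icc 1 (3-1) = {1, 2} from rfl, Finset.sum_pair (by norm_num),
    dk, dk, theta]
  push_cast
  rw [show (1:ℝ) * (2 * π / 3) = π - π/3 by ring, show (2:ℝ) * (2 * π / 3) = π/3 + π by ring,
    Real.sin_pi_sub, Real.sin_add_pi,
    show (1:ℝ) * π / 3 = π/3 by ring, show (2:ℝ) * π / 3 = π - π/3 by ring,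
    Real.sin_pi_sub, Real.sin_pi_div_three]
  have h0 := sqrt3_pos
  field_simp
  nlinarith [sqrt3_sq]

lemma Ue4 : Ue 4 = 2 * Real.sqrt 2 + 1 := by
  rw [Ue, dzero, show Finset.Icc 1 (4-1) = {1, 2, 3} from rfl]
  rw [Finset.sum_insert (by norm_num), Finset.sum_pair (by norm_num), dk, dk, dk]
  push_cast
  rw [show (1:ℝ) * π / 4 = π/4 by ring, show (2:ℝ) * π / 4 = π/2 by ring,
    show (3:ℝ) * π / 4 = π - π/4 by ring,
    Real.sin_pi_sub, Real.sin_pi_div_four, Real.sin_pi_div_two]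
  have h0 := sqrt2_pos
  field_simp
  nlinarith [sqrt2_sq]

lemma U114 : U11 4 = Real.sqrt 2 / 4 := by
  rw [U11, show Finset.Icc 1 (4-1) = {1, 2, 3} from rfl]
  rw [Finset.sum_insert (by norm_num), Finset.sum_pair (by norm_num), dk, dk, dk, theta]
  push_cast
  rw [show (1:ℝ) * (2 * π / 4) = π/2 by ring, show (2:ℝ) * (2 * π / 4) = π - 0 by ring,
    show (3:ℝ) * (2 * π / 4) = π/2 + π by ring,
    Real.sin_pi_sub, Real.sin_add_pi, Real.sin_zero, Real.sin_pi_div_two,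
    show (1:ℝ) * π / 4 = π/4 by ring, show (2:ℝ) * π / 4 = π/2 by ring,
    show (3:ℝ) * π / 4 = π - π/4 by ring,
    Real.sin_pi_sub, Real.sin_pi_div_four, Real.sin_pi_div_two]
  have h0 := sqrt2_pos
  field_simp
  nlinarith [sqrt2_sq]

lemma Ue6 : Ue 6 = 15/2 + 2 * Real.sqrt 3 := by
  rw [Ue, dzero, show Finset.Icc 1 (6-1) = {1, 2, 3, 4, 5} from rfl]
  rw [Finset.sum_insert (by norm_num), Finset.sum_insert (by norm_num),
    Finset.sum_insert (by norm_num), Finset.sum_pair (by norm_num), dk, dk, dk, dk, dk]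
  push_cast
  rw [show (1:ℝ) * π / 6 = π/6 by ring, show (2:ℝ) * π / 6 = π/3 by ring,
    show (3:ℝ) * π / 6 = π/2 by ring, show (4:ℝ) * π / 6 = π - π/3 by ring,
    show (5:ℝ) * π / 6 = π - π/6 by ring,
    Real.sin_pi_sub, Real.sin_pi_sub, Real.sin_pi_div_six, Real.sin_pi_div_three,
    Real.sin_pi_div_two]
  have h0 := sqrt3_pos
  field_simp
  obtain ⟨h3, h4, h5, h6⟩ := sqrt3_pows
  have h7 : Real.sqrt 3 ^ 7 = 27 * Real.sqrt 3 := by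
    linear_combination (Real.sqrt 3 ^ 5 + 3 * Real.sqrt 3 ^ 3 + 9 * Real.sqrt 3) * sqrt3_sq
  ring_nf
  linarith [sqrt3_sq, h3, h4, h5, h6, h7]

lemma U116 : U11 6 = 3/4 + Real.sqrt 3 / 12 := by
  rw [U11, show Finset.Icc 1 (6-1) = {1, 2, 3, 4, 5} from rfl]
  rw [Finset.sum_insert (by norm_num), Finset.sum_insert (by norm_num),
    Finset.sum_insert (by norm_num), Finset.sum_pair (by norm_num),
    dk, dk, dk, dk, dk, theta]
  push_cast
  rw [show (1:ℝ) * (2 * π / 6) = π/3 by ring, show (2:ℝ) * (2 * π / 6) = π - π/3 by ring,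
    show (3:ℝ) * (2 * π / 6) = π - 0 by ring, show (4:ℝ) * (2 * π / 6) = π/3 + π by ring,
    show (5:ℝ) * (2 * π / 6) = (π - π/3) + π by ring,
    Real.sin_add_pi, Real.sin_add_pi, Real.sin_pi_sub, Real.sin_pi_sub, Real.sin_zero,
    show (1:ℝ) * π / 6 = π/6 by ring, show (2:ℝ) * π / 6 = π/3 by ring,
    show (3:ℝ) * π / 6 = π/2 by ring, show (4:ℝ) * π / 6 = π - π/3 by ring,
    show (5:ℝ) * π / 6 = π - π/6 by ring,
    Real.sin_pi_sub, Real.sin_pi_sub, Real.sin_pi_div_six, Real.sin_pi_div_three,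
    Real.sin_pi_div_two]
  have h0 := sqrt3_pos
  field_simp
  obtain ⟨h3, h4, h5, h6⟩ := sqrt3_pows
  have h7 : Real.sqrt 3 ^ 7 = 27 * Real.sqrt 3 := by
    linear_combination (Real.sqrt 3 ^ 5 + 3 * Real.sqrt 3 ^ 3 + 9 * Real.sqrt 3) * sqrt3_sq
  ring_nf
  linarith [sqrt3_sq, h3, h4, h5, h6, h7]

lemma sqrt5_sq : Real.sqrt 5 ^ 2 = 5 := Real.sq_sqrt (by norm_num)
lemma sqrt5_lb : 2.236 < Real.sqrt 5 := by nlinarith [Real.sqrt_nonneg 5, sqrt5_sq]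
lemma sqrt5_ub : Real.sqrt 5 < 2.2361 := by nlinarith [Real.sqrt_nonneg 5, sqrt5_sq]

lemma sin_pi5_pos : 0 < Real.sin (π/5) := by
  apply Real.sin_pos_of_pos_of_lt_pi <;> nlinarith [Real.pi_pos, Real.pi_gt_three]

lemma sin_2pi5_pos : 0 < Real.sin (2*π/5) := by
  apply Real.sin_pos_of_pos_of_lt_pi <;> nlinarith [Real.pi_pos, Real.pi_gt_three]

lemma sin_pi5_sq : Real.sin (π/5) ^ 2 = 1 - ((1 + Real.sqrt 5)/4) ^ 2 := by
  have h := Real.sin_sq_add_cos_sq (π/5)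
  rw [Real.cos_pi_div_five] at h
  linarith

lemma sin_2pi5_sq :
    Real.sin (2*π/5) ^ 2 = 1 - (2 * ((1 + Real.sqrt 5)/4) ^ 2 - 1) ^ 2 := by
  have h := Real.sin_sq_add_cos_sq (2*π/5)
  rw [show (2:ℝ)*π/5 = 2*(π/5) by ring, Real.cos_two_mul, Real.cos_pi_div_five] at h
  rw [show (2:ℝ)*π/5 = 2*(π/5) by ring]
  linarith

lemma sin_pi5_lb : 0.587 ≤ Real.sin (π/5) := by
  nlinarith [sin_pi5_sq, sin_pi5_pos, sqrt5_ub, sqrt5_sq, Real.sqrt_nonneg 5]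

lemma sin_pi5_ub : Real.sin (π/5) ≤ 0.588 := by
  nlinarith [sin_pi5_sq, sin_pi5_pos, sqrt5_lb, sqrt5_sq, Real.sqrt_nonneg 5]

lemma sin_2pi5_lb : 0.95 ≤ Real.sin (2*π/5) := by
  nlinarith [sin_2pi5_sq, sin_2pi5_pos, sqrt5_lb, sqrt5_ub, sqrt5_sq, Real.sqrt_nonneg 5]

lemma Ue5 : Ue 5 = 5 * (1 / Real.sin (π/5) + 1 / Real.sin (2*π/5)) / 2 := by
  rw [Ue, dzero, show Finset.Icc 1 (5-1) = {1, 2, 3, 4} from rfl]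
  rw [Finset.sum_insert (by norm_num), Finset.sum_insert (by norm_num),
    Finset.sum_pair (by norm_num), dk, dk, dk, dk]
  push_cast
  rw [show (1:ℝ) * π / 5 = π/5 by ring, show (2:ℝ) * π / 5 = 2*π/5 by ring,
    show (3:ℝ) * π / 5 = π - 2*π/5 by ring, show (4:ℝ) * π / 5 = π - π/5 by ring,
    Real.sin_pi_sub, Real.sin_pi_sub]
  have ha := sin_pi5_pos; have hb := sin_2pi5_pos
  field_simp
  ring

lemma U115 : U11 5 = Real.sin (2*π/5) ^ 2 / (8 * Real.sin (π/5) ^ 3)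
    + Real.sin (π/5) ^ 2 / (8 * Real.sin (2*π/5) ^ 3) := by
  rw [U11, show Finset.Icc 1 (5-1) = {1, 2, 3, 4} from rfl]
  rw [Finset.sum_insert (by norm_num), Finset.sum_insert (by norm_num),
    Finset.sum_pair (by norm_num), dk, dk, dk, dk, theta]
  push_cast
  rw [show (1:ℝ) * (2 * π / 5) = 2*π/5 by ring, show (2:ℝ) * (2 * π / 5) = π - π/5 by ring,
    show (3:ℝ) * (2 * π / 5) = π/5 + π by ring,
    show (4:ℝ) * (2 * π / 5) = (π - 2*π/5) + π by ring,
    Real.sin_add_pi, Real.sin_add_pi, Real.sin_pi_sub, Real.sin_pi_sub,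
    show (1:ℝ) * π / 5 = π/5 by ring, show (2:ℝ) * π / 5 = 2*π/5 by ring,
    show (3:ℝ) * π / 5 = π - 2*π/5 by ring, show (4:ℝ) * π / 5 = π - π/5 by ring,
    Real.sin_pi_sub, Real.sin_pi_sub]
  have ha := sin_pi5_pos; have hb := sin_2pi5_pos
  field_simp
  ring

lemma hE5 : Ue 5 + (5:ℝ) * U11 5 < (5:ℝ) ^ 2 / 2 := by
  have ha := sin_pi5_pos; have hb := sin_2pi5_pos
  have hal := sin_pi5_lb; have hau := sin_pi5_ub
  have hbl := sin_2pi5_lb; have hbu := Real.sin_le_one (2*π/5)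
  rw [Ue5, U115]
  have h1 : 1 / Real.sin (π/5) ≤ 1 / 0.587 :=
    one_div_le_one_div_of_le (by norm_num) hal
  have h2 : 1 / Real.sin (2*π/5) ≤ 1 / 0.95 :=
    one_div_le_one_div_of_le (by norm_num) hbl
  have h3 : Real.sin (2*π/5) ^ 2 / (8 * Real.sin (π/5) ^ 3) ≤ 1 / (8 * 0.587 ^ 3) := by
    gcongr <;> nlinarith
  have h4 : Real.sin (π/5) ^ 2 / (8 * Real.sin (2*π/5) ^ 3)
      ≤ 0.588 ^ 2 / (8 * 0.95 ^ 3) := by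
    gcongr <;> nlinarith
  norm_num at h1 h2 h3 h4 ⊢
  linarith

/-- for 3 ≤ n ≤ 6, there is exactly one positive real root of
b_n m² + c_n m + d_n, equivalently exactly one m > 0 with det A₁(m) = 0. -/
theorem unique_positive_root_small_n (n : ℕ) (h3 : 3 ≤ n) (h6 : n ≤ 6) :
    (∃! m : ℝ, 0 < m ∧ bcoef n * m ^ 2 + ccoef n * m + dcoef n = 0)
    ∧ (∃! m : ℝ, 0 < m ∧ (A1block n m).det = 0) := by
  interval_cases n
  · refine main_aux 3 (by norm_num) (Ue_pos (by norm_num)) (U11_nonneg (by norm_num)) ?_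
    rw [Ue3, U113]; push_cast; nlinarith [sqrt3_sq, sqrt3_pos]
  · refine main_aux 4 (by norm_num) (Ue_pos (by norm_num)) (U11_nonneg (by norm_num)) ?_
    rw [Ue4, U114]; push_cast; nlinarith [sqrt2_sq, sqrt2_pos]
  · refine main_aux 5 (by norm_num) (Ue_pos (by norm_num)) (U11_nonneg (by norm_num)) ?_
    have := hE5; push_cast; linarith
  · refine main_aux 6 (by norm_num) (Ue_pos (by norm_num)) (U11_nonneg (by norm_num)) ?_
    rw [Ue6, U116]; push_cast; nlinarith [sqrt3_sq, sqrt3_pos]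

end
end

section
/- Let n ≥ 1, θ = 2π/n, and let l be an integer. Suppose H'_k ∈ M₂(ℝ) for k ∈ ℤ/nℤ, and define the block matrix H, with 2×2 blocks indexed by j, j' ∈ ℤ/nℤ, by H_{j,j'} = R(jθ) H'_{j'−j} R(jθ)ᵀ, where R(t) is the 2×2 rotation matrix with first row (cos t, −sin t) and second row (sin t, cos t). Define complex vectors v, w ∈ (ℂ²)^{ℤ/nℤ} by v_j = e^{−i l j θ} R(jθ) e₁ and w_j = e^{−i l j θ} R(jθ) e₂, where e₁ = (1,0)ᵀ, e₂ = (0,1)ᵀ. Then H v = h₁ v + h₂ w and H w = h₁' v + h₂' w, where (h₁, h₂)ᵀ = Σ_{k∈ℤ/nℤ} e^{−i l k θ} H'_k (cos kθ, sin kθ)ᵀ and (h₁', h₂')ᵀ = Σ_{k∈ℤ/nℤ} e^{−i l k θ} H'_k (−sin kθ, cos kθ)ᵀ. -/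
open Real Finset Matrix

noncomputable section

/-- The 2×2 rotation matrix R(t). -/
def rotM (t : ℝ) : Matrix (Fin 2) (Fin 2) ℝ :=
  !![Real.cos t, -Real.sin t; Real.sin t, Real.cos t]

/-- The 2×2 block H_{j,j'} = R(jθ) H'_{j'−j} R(jθ)ᵀ of the equivariant block matrix. -/
def blockEntry (n : ℕ) (H' : ZMod n → Matrix (Fin 2) (Fin 2) ℝ) (j j' : ZMod n) :
    Matrix (Fin 2) (Fin 2) ℝ :=
  rotM (j.val * theta n) * H' (j' - j) * (rotM (j.val * theta n))ᵀ

/-- The blockwise action of H on (ℂ²)^{ℤ/nℤ}: (H x)_j = Σ_{j'} H_{j,j'} x_{j'}. -/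
def blockAct (n : ℕ) [NeZero n] (H' : ZMod n → Matrix (Fin 2) (Fin 2) ℝ)
    (x : ZMod n → Fin 2 → ℂ) (j : ZMod n) : Fin 2 → ℂ :=
  ∑ j' : ZMod n, ((blockEntry n H' j j').map (fun a => (a : ℂ))).mulVec (x j')

/-- The Fourier vector v with v_j = e^{−i l j θ} R(jθ) e₁ = e^{−i l j θ}(cos jθ, sin jθ)ᵀ. -/
def fourierV (n : ℕ) (l : ℤ) (j : ZMod n) : Fin 2 → ℂ :=
  fun i => Complex.exp (-Complex.I * l * j.val * theta n) *
    ![((Real.cos (j.val * theta n) : ℝ) : ℂ), ((Real.sin (j.val * theta n) : ℝ) : ℂ)] i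

/-- The Fourier vector w with w_j = e^{−i l j θ} R(jθ) e₂ = e^{−i l j θ}(−sin jθ, cos jθ)ᵀ. -/
def fourierW (n : ℕ) (l : ℤ) (j : ZMod n) : Fin 2 → ℂ :=
  fun i => Complex.exp (-Complex.I * l * j.val * theta n) *
    ![((-Real.sin (j.val * theta n) : ℝ) : ℂ), ((Real.cos (j.val * theta n) : ℝ) : ℂ)] i

/-- (h₁, h₂)ᵀ = Σ_k e^{−i l k θ} H'_k (cos kθ, sin kθ)ᵀ. -/
def hcoef (n : ℕ) [NeZero n] (H' : ZMod n → Matrix (Fin 2) (Fin 2) ℝ) (l : ℤ) :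
    Fin 2 → ℂ :=
  ∑ k : ZMod n, Complex.exp (-Complex.I * l * k.val * theta n) •
    ((H' k).map (fun a => (a : ℂ))).mulVec
      ![((Real.cos (k.val * theta n) : ℝ) : ℂ), ((Real.sin (k.val * theta n) : ℝ) : ℂ)]

/-- (h₁', h₂')ᵀ = Σ_k e^{−i l k θ} H'_k (−sin kθ, cos kθ)ᵀ. -/
def hcoef' (n : ℕ) [NeZero n] (H' : ZMod n → Matrix (Fin 2) (Fin 2) ℝ) (l : ℤ) :
    Fin 2 → ℂ :=
  ∑ k : ZMod n, Complex.exp (-Complex.I * l * k.val * theta n) •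
    ((H' k).map (fun a => (a : ℂ))).mulVec
      ![((-Real.sin (k.val * theta n) : ℝ) : ℂ), ((Real.cos (k.val * theta n) : ℝ) : ℂ)]

lemma mulVec_map_ofReal (A : Matrix (Fin 2) (Fin 2) ℝ) (x : Fin 2 → ℝ) :
    (A.map (fun a => (a:ℂ))).mulVec (fun i => ((x i : ℝ):ℂ)) = fun i => ((A.mulVec x i : ℝ) : ℂ) := by
  funext i
  simp [Matrix.mulVec, dotProduct, Fin.sum_univ_two, Matrix.map_apply]

lemma rot_transpose_shift (t s : ℝ) :
    (rotM t)ᵀ.mulVec ![Real.cos (t+s), Real.sin (t+s)] = ![Real.cos s, Real.sin s] := by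
  funext i
  fin_cases i
  · simp [rotM, Matrix.mulVec, dotProduct, Fin.sum_univ_two, Real.cos_add, Real.sin_add,
      Matrix.transpose_apply]
    linear_combination Real.cos s * (Real.sin_sq_add_cos_sq t)
  · simp [rotM, Matrix.mulVec, dotProduct, Fin.sum_univ_two, Real.cos_add, Real.sin_add,
      Matrix.transpose_apply]
    linear_combination Real.sin s * (Real.sin_sq_add_cos_sq t)

lemma rot_transpose_shift' (t s : ℝ) :
    (rotM t)ᵀ.mulVec ![-Real.sin (t+s), Real.cos (t+s)] = ![-Real.sin s, Real.cos s] := by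
  funext i
  fin_cases i
  · simp [rotM, Matrix.mulVec, dotProduct, Fin.sum_univ_two, Real.cos_add, Real.sin_add,
      Matrix.transpose_apply]
    linear_combination (-Real.sin s) * (Real.sin_sq_add_cos_sq t)
  · simp [rotM, Matrix.mulVec, dotProduct, Fin.sum_univ_two, Real.cos_add, Real.sin_add,
      Matrix.transpose_apply]
    linear_combination Real.cos s * (Real.sin_sq_add_cos_sq t)

lemma rot_mulVec (t : ℝ) (x : Fin 2 → ℝ) :
    (rotM t).mulVec x = fun i => x 0 * ![Real.cos t, Real.sin t] i + x 1 * ![-Real.sin t, Real.cos t] i := by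
  funext i; fin_cases i <;>
    simp [rotM, Matrix.mulVec, dotProduct, Fin.sum_univ_two] <;> ring

lemma angle_split (n : ℕ) [NeZero n] (j k : ZMod n) :
    ∃ m : ℕ, (j.val : ℝ) * theta n + (k.val:ℝ) * theta n = ((j+k).val : ℝ) * theta n + m * (2*Real.pi) := by
  refine ⟨(j.val + k.val)/n, ?_⟩
  have hn : (n:ℝ) ≠ 0 := Nat.cast_ne_zero.mpr (NeZero.ne n)
  have h : j.val + k.val = (j+k).val + n * ((j.val + k.val)/n) := by
    rw [ZMod.val_add]; exact (Nat.mod_add_div _ _).symm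
  have h2 : ((j.val:ℝ)) + k.val = ((j+k).val:ℝ) + n * (((j.val+k.val)/n : ℕ):ℝ) := by
    exact_mod_cast congrArg (Nat.cast : ℕ → ℝ) h
  have hnθ : (n:ℝ) * theta n = 2*Real.pi := by unfold theta; field_simp
  linear_combination (theta n) * h2 + (((j.val+k.val)/n : ℕ):ℝ) * hnθ

lemma cos_val_add (n : ℕ) [NeZero n] (j k : ZMod n) :
    Real.cos (((j+k).val : ℝ) * theta n) = Real.cos ((j.val:ℝ) * theta n + (k.val:ℝ) * theta n) := by
  obtain ⟨m, hm⟩ := angle_split n j k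
  rw [hm, Real.cos_add_nat_mul_two_pi]

lemma sin_val_add (n : ℕ) [NeZero n] (j k : ZMod n) :
    Real.sin (((j+k).val : ℝ) * theta n) = Real.sin ((j.val:ℝ) * theta n + (k.val:ℝ) * theta n) := by
  obtain ⟨m, hm⟩ := angle_split n j k
  rw [hm, Real.sin_add_nat_mul_two_pi]

lemma exp_val_add (n : ℕ) [NeZero n] (l : ℤ) (j k : ZMod n) :
    Complex.exp (-Complex.I * l * ((j+k).val : ℕ) * theta n)
      = Complex.exp (-Complex.I * l * (j.val:ℕ) * theta n)
        * Complex.exp (-Complex.I * l * (k.val:ℕ) * theta n) := by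
  obtain ⟨m, hm⟩ := angle_split n j k
  have hmC : ((j.val:ℂ)) * theta n + (k.val:ℂ) * theta n = ((j+k).val:ℂ) * theta n + m * (2*Real.pi) := by
    exact_mod_cast congrArg (Complex.ofReal) hm
  rw [← Complex.exp_add]
  have : -Complex.I * l * (j.val:ℕ) * theta n + -Complex.I * l * (k.val:ℕ) * theta n
      = -Complex.I * l * ((j+k).val : ℕ) * theta n + ((-(l * m) : ℤ) : ℂ) * (2*Real.pi*Complex.I) := by
    push_cast
    linear_combination (-Complex.I * l) * hmC
  rw [this, Complex.exp_add, Complex.exp_int_mul_two_pi_mul_I, mul_one]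

lemma mapC_mul (A B : Matrix (Fin 2) (Fin 2) ℝ) :
    (A * B).map (fun a => (a:ℂ)) = A.map (fun a => (a:ℂ)) * B.map (fun a => (a:ℂ)) :=
  Matrix.map_mul (f := Complex.ofRealHom)

lemma key_term (t : ℝ) (M : Matrix (Fin 2) (Fin 2) ℝ) (c : ℂ) (u w : Fin 2 → ℝ)
    (hw : (rotM t)ᵀ.mulVec w = u) :
    ((rotM t * M * (rotM t)ᵀ).map (fun a => (a:ℂ))).mulVec (fun i => c * ((w i :ℝ):ℂ))
    = fun i =>
        c * ((M.map (fun a=>(a:ℂ))).mulVec (fun i' => ((u i':ℝ):ℂ)) 0)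
            * (((![Real.cos t, Real.sin t] : Fin 2 → ℝ) i : ℝ):ℂ)
      + c * ((M.map (fun a=>(a:ℂ))).mulVec (fun i' => ((u i':ℝ):ℂ)) 1)
            * (((![-Real.sin t, Real.cos t] : Fin 2 → ℝ) i : ℝ):ℂ) := by
  have hsmul : (fun i => c * ((w i:ℝ):ℂ)) = c • (fun i => ((w i:ℝ):ℂ)) := rfl
  rw [hsmul, Matrix.mulVec_smul, mapC_mul, mapC_mul, ← Matrix.mulVec_mulVec,
    ← Matrix.mulVec_mulVec, mulVec_map_ofReal, hw, mulVec_map_ofReal, mulVec_map_ofReal,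
    rot_mulVec]
  funext i
  fin_cases i <;>
    simp [Matrix.mulVec, dotProduct, Fin.sum_univ_two, Matrix.map_apply] <;> ring

/-- H v = h₁ v + h₂ w and H w = h₁' v + h₂' w. -/
theorem blockAct_fourier (n : ℕ) [NeZero n] (hn : 1 ≤ n) (l : ℤ)
    (H' : ZMod n → Matrix (Fin 2) (Fin 2) ℝ) :
    (∀ j : ZMod n, blockAct n H' (fourierV n l) j
      = fun i => hcoef n H' l 0 * fourierV n l j i + hcoef n H' l 1 * fourierW n l j i)
    ∧ (∀ j : ZMod n, blockAct n H' (fourierW n l) j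
      = fun i => hcoef' n H' l 0 * fourierV n l j i + hcoef' n H' l 1 * fourierW n l j i) := by
  constructor
  · intro j
    funext i
    have e1 : blockAct n H' (fourierV n l) j i
        = ∑ k : ZMod n,
          (((blockEntry n H' j (j+k)).map (fun a => (a:ℂ))).mulVec (fourierV n l (j+k)) i) := by
      rw [blockAct, Finset.sum_apply]
      exact (Fintype.sum_equiv (Equiv.addLeft j)
        (fun k => ((blockEntry n H' j (j+k)).map (fun a => (a:ℂ))).mulVec (fourierV n l (j+k)) i)
        _ (fun k => rfl)).symm
    have e2 : ∀ k : ZMod n,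
        ((blockEntry n H' j (j+k)).map (fun a => (a:ℂ))).mulVec (fourierV n l (j+k)) i
        = (Complex.exp (-Complex.I * l * (k.val:ℕ) * theta n) *
            ((H' k).map (fun a => (a:ℂ))).mulVec
              ![((Real.cos ((k.val:ℝ) * theta n) : ℝ):ℂ), ((Real.sin ((k.val:ℝ) * theta n):ℝ):ℂ)] 0)
            * fourierV n l j i
        + (Complex.exp (-Complex.I * l * (k.val:ℕ) * theta n) *
            ((H' k).map (fun a => (a:ℂ))).mulVec
              ![((Real.cos ((k.val:ℝ) * theta n) : ℝ):ℂ), ((Real.sin ((k.val:ℝ) * theta n):ℝ):ℂ)] 1)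
            * fourierW n l j i := by
      intro k
      have hb : blockEntry n H' j (j+k)
          = rotM ((j.val:ℝ) * theta n) * H' k * (rotM ((j.val:ℝ) * theta n))ᵀ := by
        rw [blockEntry, add_sub_cancel_left]
      have hv : fourierV n l (j+k) = fun i' =>
          (Complex.exp (-Complex.I*l*(j.val:ℕ)*theta n) * Complex.exp (-Complex.I*l*(k.val:ℕ)*theta n))
          * (((![Real.cos ((j.val:ℝ)*theta n + (k.val:ℝ)*theta n),
                Real.sin ((j.val:ℝ)*theta n + (k.val:ℝ)*theta n)] : Fin 2 → ℝ) i' : ℝ):ℂ) := by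
        funext i'
        rw [fourierV, ← exp_val_add]
        fin_cases i'
        · simp only [Matrix.cons_val_zero, Fin.isValue]
          rw [cos_val_add n j k]; simp
        · simp only [Matrix.cons_val_one, Matrix.head_cons, Fin.isValue]
          rw [sin_val_add n j k]; simp
      have hvec : (fun i' => (((![Real.cos ((k.val:ℝ) * theta n), Real.sin ((k.val:ℝ) * theta n)] : Fin 2 → ℝ) i' : ℝ):ℂ))
          = ![((Real.cos ((k.val:ℝ) * theta n) : ℝ):ℂ), ((Real.sin ((k.val:ℝ) * theta n):ℝ):ℂ)] := by
        funext i'; fin_cases i' <;> simp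
      rw [hb, hv, key_term _ _ _ _ _ (rot_transpose_shift ((j.val:ℝ) * theta n) ((k.val:ℝ) * theta n)), hvec]
      fin_cases i <;> simp [fourierV, fourierW] <;> ring
    rw [e1, Finset.sum_congr rfl (fun k _ => e2 k), Finset.sum_add_distrib,
      ← Finset.sum_mul, ← Finset.sum_mul]
    congr 2 <;> simp [hcoef, Finset.sum_apply, Pi.smul_apply, smul_eq_mul]
  · intro j
    funext i
    have e1 : blockAct n H' (fourierW n l) j i
        = ∑ k : ZMod n,
          (((blockEntry n H' j (j+k)).map (fun a => (a:ℂ))).mulVec (fourierW n l (j+k)) i) := by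
      rw [blockAct, Finset.sum_apply]
      exact (Fintype.sum_equiv (Equiv.addLeft j)
        (fun k => ((blockEntry n H' j (j+k)).map (fun a => (a:ℂ))).mulVec (fourierW n l (j+k)) i)
        _ (fun k => rfl)).symm
    have e2 : ∀ k : ZMod n,
        ((blockEntry n H' j (j+k)).map (fun a => (a:ℂ))).mulVec (fourierW n l (j+k)) i
        = (Complex.exp (-Complex.I * l * (k.val:ℕ) * theta n) *
            ((H' k).map (fun a => (a:ℂ))).mulVec
              ![((-Real.sin ((k.val:ℝ) * theta n) : ℝ):ℂ), ((Real.cos ((k.val:ℝ) * theta n):ℝ):ℂ)] 0)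
            * fourierV n l j i
        + (Complex.exp (-Complex.I * l * (k.val:ℕ) * theta n) *
            ((H' k).map (fun a => (a:ℂ))).mulVec
              ![((-Real.sin ((k.val:ℝ) * theta n) : ℝ):ℂ), ((Real.cos ((k.val:ℝ) * theta n):ℝ):ℂ)] 1)
            * fourierW n l j i := by
      intro k
      have hb : blockEntry n H' j (j+k)
          = rotM ((j.val:ℝ) * theta n) * H' k * (rotM ((j.val:ℝ) * theta n))ᵀ := by
        rw [blockEntry, add_sub_cancel_left]
      have hv : fourierW n l (j+k) = fun i' =>
          (Complex.exp (-Complex.I*l*(j.val:ℕ)*theta n) * Complex.exp (-Complex.I*l*(k.val:ℕ)*theta n))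
          * (((![-Real.sin ((j.val:ℝ)*theta n + (k.val:ℝ)*theta n),
                Real.cos ((j.val:ℝ)*theta n + (k.val:ℝ)*theta n)] : Fin 2 → ℝ) i' : ℝ):ℂ) := by
        funext i'
        rw [fourierW, ← exp_val_add]
        fin_cases i'
        · simp only [Matrix.cons_val_zero, Fin.isValue]
          rw [sin_val_add n j k]; simp
        · simp only [Matrix.cons_val_one, Matrix.head_cons, Fin.isValue]
          rw [cos_val_add n j k]; simp
      have hvec : (fun i' => (((![-Real.sin ((k.val:ℝ) * theta n), Real.cos ((k.val:ℝ) * theta n)] : Fin 2 → ℝ) i' : ℝ):ℂ))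
          = ![((-Real.sin ((k.val:ℝ) * theta n) : ℝ):ℂ), ((Real.cos ((k.val:ℝ) * theta n):ℝ):ℂ)] := by
        funext i'; fin_cases i' <;> simp
      rw [hb, hv, key_term _ _ _ _ _ (rot_transpose_shift' ((j.val:ℝ) * theta n) ((k.val:ℝ) * theta n)), hvec]
      fin_cases i <;> simp [fourierV, fourierW] <;> ring
    rw [e1, Finset.sum_congr rfl (fun k _ => e2 k), Finset.sum_add_distrib,
      ← Finset.sum_mul, ← Finset.sum_mul]
    congr 2 <;> simp [hcoef', Finset.sum_apply, Pi.smul_apply, smul_eq_mul]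


end
end

section
/- Let n ≥ 3, θ = 2π/n, I₀ = √n, and let l be an integer with 1 ≤ l ≤ ⌊n/2⌋. For 1 ≤ k ≤ n−1 let D_k = −q_n q_kᵀ/I₀³, and let D_n = −q_n q_nᵀ/I₀³ + E₂/I₀, where q_k = (cos kθ, sin kθ)ᵀ, q_n = (1,0)ᵀ, and E₂ is the 2×2 identity. Then Σ_{k=1}^{n} D_k e^{−i l k θ} (cos kθ, sin kθ)ᵀ = (1/I₀, 0)ᵀ and Σ_{k=1}^{n} D_k e^{−i l k θ} (−sin kθ, cos kθ)ᵀ = (0, 1/I₀)ᵀ. -/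
open Real Finset

noncomputable section

/-- U_{l1} -/
def Ul1 (n l : ℕ) : ℂ :=
  ∑ k ∈ Finset.Icc 1 (n - 1),
    (((1 - Real.cos (k * theta n) * Real.cos (l * k * theta n)
        - 3 * (Real.cos (k * theta n) - Real.cos (l * k * theta n)))
      / (2 * dk n k ^ 3) : ℝ) : ℂ)

/-- U_{l2} -/
def Ul2 (n l : ℕ) : ℂ :=
  ∑ k ∈ Finset.Icc 1 (n - 1),
    Complex.I * ((Real.sin (k * theta n) * Real.sin (l * k * theta n)
      / (2 * dk n k ^ 3) : ℝ) : ℂ)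

/-- U'_{l1} -/
def Ul1' (n l : ℕ) : ℂ :=
  ∑ k ∈ Finset.Icc 1 (n - 1),
    (-Complex.I) * ((Real.sin (k * theta n) * Real.sin (l * k * theta n)
      / (2 * dk n k ^ 3) : ℝ) : ℂ)

/-- U'_{l2} -/
def Ul2' (n l : ℕ) : ℂ :=
  ∑ k ∈ Finset.Icc 1 (n - 1),
    (((1 - Real.cos (k * theta n) * Real.cos (l * k * theta n)
        + 3 * (Real.cos (k * theta n) - Real.cos (l * k * theta n)))
      / (2 * dk n k ^ 3) : ℝ) : ℂ)

/-- The 2×2 block A_l(m), for 2 ≤ l ≤ ⌊n/2⌋. -/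
def Ablock (n l : ℕ) (m : ℝ) : Matrix (Fin 2) (Fin 2) ℂ :=
  !![((Uzero n m / Izero n : ℝ) : ℂ) + (Izero n : ℂ) * (Ul1 n l + 2 * (m : ℂ)),
      -Complex.I * (Izero n : ℂ) * Ul1' n l;
     Complex.I * (Izero n : ℂ) * Ul2 n l,
      ((Uzero n m / Izero n : ℝ) : ℂ) + (Izero n : ℂ) * (Ul2' n l - (m : ℂ))]

/-- a_l = (U_{e0}/I₀ + I₀ U_{l1})(U_{e0}/I₀ + I₀ U'_{l2}) − I₀² U'_{l1} U_{l2}. -/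
def aA (n l : ℕ) : ℂ :=
  (((Ue n / Izero n : ℝ) : ℂ) + (Izero n : ℂ) * Ul1 n l)
    * (((Ue n / Izero n : ℝ) : ℂ) + (Izero n : ℂ) * Ul2' n l)
  - (Izero n : ℂ) ^ 2 * Ul1' n l * Ul2 n l

/-- q_k = (cos kθ, sin kθ)ᵀ (so q_n = (1,0)ᵀ). -/
def qvec (n k : ℕ) : Fin 2 → ℝ := ![Real.cos (k * theta n), Real.sin (k * theta n)]

/-- The blocks D_{nk} of the Hessian of √(2I) at the central + regular n-gon
configuration: D_k = −q_n q_kᵀ/I₀³ for k ≤ n−1, D_n = −q_n q_nᵀ/I₀³ + E₂/I₀. -/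
def Dmat (n k : ℕ) : Matrix (Fin 2) (Fin 2) ℝ :=
  if k = n then
    -(Izero n ^ 3)⁻¹ • Matrix.vecMulVec (qvec n n) (qvec n n)
      + (Izero n)⁻¹ • (1 : Matrix (Fin 2) (Fin 2) ℝ)
  else
    -(Izero n ^ 3)⁻¹ • Matrix.vecMulVec (qvec n n) (qvec n k)

lemma theta_mul_n (n : ℕ) (hn : n ≠ 0) : (n : ℝ) * theta n = 2 * Real.pi := by
  have : (n:ℝ) ≠ 0 := Nat.cast_ne_zero.mpr hn
  simp only [theta]
  field_simp

lemma cos_n (n : ℕ) (hn : n ≠ 0) : Real.cos (n * theta n) = 1 := by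
  rw [theta_mul_n n hn, Real.cos_two_pi]
lemma sin_n (n : ℕ) (hn : n ≠ 0) : Real.sin (n * theta n) = 0 := by
  rw [theta_mul_n n hn, Real.sin_two_pi]

lemma exp_n_eq_one (n l : ℕ) (hn : n ≠ 0) :
    Complex.exp (-Complex.I * l * n * theta n) = 1 := by
  rw [Complex.exp_eq_one_iff]
  refine ⟨-l, ?_⟩
  have h : ((n : ℝ) * theta n : ℝ) = 2 * Real.pi := theta_mul_n n hn
  have h' : (n : ℂ) * (theta n : ℂ) = 2 * (Real.pi : ℂ) := by
    exact_mod_cast congrArg (fun x : ℝ => (x : ℂ)) h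
  push_cast
  linear_combination (-(l:ℂ)) * Complex.I * h'

lemma zeta_ne_one (n l : ℕ) (hn : 3 ≤ n) (hl1 : 1 ≤ l) (hl : l ≤ n / 2) :
    Complex.exp (-Complex.I * l * theta n) ≠ 1 := by
  intro h
  rw [Complex.exp_eq_one_iff] at h
  obtain ⟨m, hm⟩ := h
  have hπ : (Real.pi : ℂ) ≠ 0 := by exact_mod_cast Real.pi_ne_zero
  have hth : (theta n : ℂ) = 2 * (Real.pi:ℂ) / n := by
    push_cast [theta]; ring
  rw [hth] at hm
  have hI : Complex.I ≠ 0 := Complex.I_ne_zero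
  have hnC : (n:ℂ) ≠ 0 := by exact_mod_cast (by omega : n ≠ 0)
  have key : (-(l:ℂ)) = (m:ℂ) * n := by
    field_simp at hm
    have h2 : (2:ℂ) ≠ 0 := two_ne_zero
    apply mul_left_cancel₀ h2
    apply mul_left_cancel₀ hπ
    apply mul_left_cancel₀ hI
    linear_combination (2 * Complex.I * (Real.pi:ℂ)) * hm
  have keyZ : (-(l:ℤ)) = m * n := by exact_mod_cast key
  have hln : l < n := by omega
  have hdvd : (n:ℤ) ∣ (l:ℤ) := ⟨-m, by linarith [keyZ]⟩
  have : n ∣ l := Int.ofNat_dvd.mp (by exact_mod_cast hdvd)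
  have := Nat.le_of_dvd (by omega) this
  omega

lemma geom_zero (n l : ℕ) (hn : 3 ≤ n) (hl1 : 1 ≤ l) (hl : l ≤ n / 2) :
    ∑ k ∈ Icc 1 n, Complex.exp (-Complex.I * l * k * theta n) = 0 := by
  set ζ := Complex.exp (-Complex.I * l * theta n) with hζ
  have hpow : ∀ k : ℕ, Complex.exp (-Complex.I * l * k * theta n) = ζ ^ k := by
    intro k
    rw [hζ, ← Complex.exp_nat_mul]
    ring_nf
  have hζn : ζ ^ n = 1 := by
    rw [← hpow n]; exact exp_n_eq_one n l (by omega)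
  have hζ1 : ζ ≠ 1 := zeta_ne_one n l hn hl1 hl
  calc ∑ k ∈ Icc 1 n, Complex.exp (-Complex.I * l * k * theta n)
      = ∑ k ∈ Icc 1 n, ζ ^ k := Finset.sum_congr rfl fun k _ => hpow k
    _ = ∑ k ∈ range n, ζ ^ (1 + k) := by
        rw [← Finset.Ico_add_one_right_eq_Icc, Finset.sum_Ico_eq_sum_range]
        simp
    _ = ζ * ∑ k ∈ range n, ζ ^ k := by
        rw [Finset.mul_sum]; exact Finset.sum_congr rfl fun k _ => by ring
    _ = 0 := by rw [geom_sum_eq hζ1, hζn]; simp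

lemma Dmat_mulVec (n k : ℕ) (hn : n ≠ 0) (w : Fin 2 → ℂ) :
    ((Dmat n k).map (fun a => (a:ℂ))).mulVec w =
    fun i => -(((Izero n ^ 3)⁻¹ : ℝ) : ℂ) * (![1, 0] i)
        * ((Real.cos (k * theta n) : ℂ) * w 0 + (Real.sin (k * theta n) : ℂ) * w 1)
      + (if k = n then (((Izero n)⁻¹ : ℝ) : ℂ) * w i else 0) := by
  funext i
  by_cases hk : k = n
  · fin_cases i <;>
      simp [Dmat, hk, qvec, Matrix.mulVec, dotProduct, Fin.sum_univ_two,
        Matrix.vecMulVec_apply, Matrix.map_apply, Matrix.one_apply,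
        cos_n n hn, sin_n n hn] <;> ring
  · fin_cases i <;>
      simp [Dmat, hk, qvec, Matrix.mulVec, dotProduct, Fin.sum_univ_two,
        Matrix.vecMulVec_apply, Matrix.map_apply,
        cos_n n hn, sin_n n hn] <;> ring

/-- Σ_{k=1}^{n} D_k e^{−ilkθ}(cos kθ, sin kθ)ᵀ = (1/I₀, 0)ᵀ and
Σ_{k=1}^{n} D_k e^{−ilkθ}(−sin kθ, cos kθ)ᵀ = (0, 1/I₀)ᵀ. -/
theorem inertia_hessian_fourier (n : ℕ) (hn : 3 ≤ n) (l : ℕ)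
    (hl1 : 1 ≤ l) (hl : l ≤ n / 2) :
    (∑ k ∈ Finset.Icc 1 n, Complex.exp (-Complex.I * l * k * theta n) •
        ((Dmat n k).map (fun a => (a : ℂ))).mulVec
          ![((Real.cos (k * theta n) : ℝ) : ℂ), ((Real.sin (k * theta n) : ℝ) : ℂ)])
      = ![((1 / Izero n : ℝ) : ℂ), 0]
    ∧ (∑ k ∈ Finset.Icc 1 n, Complex.exp (-Complex.I * l * k * theta n) •
        ((Dmat n k).map (fun a => (a : ℂ))).mulVec
          ![((-Real.sin (k * theta n) : ℝ) : ℂ), ((Real.cos (k * theta n) : ℝ) : ℂ)])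
      = ![0, ((1 / Izero n : ℝ) : ℂ)] := by

  have hn0 : n ≠ 0 := by omega
  have hmem : n ∈ Icc 1 n := by simp; omega
  have hgeom := geom_zero n l hn hl1 hl
  have hdot : ∀ k : ℕ,
      (Real.cos (k * theta n) : ℂ) * (Real.cos (k * theta n) : ℂ)
        + (Real.sin (k * theta n) : ℂ) * (Real.sin (k * theta n) : ℂ) = 1 := by
    intro k
    have := Real.sin_sq_add_cos_sq (k * theta n)
    have hr : Real.cos (k * theta n) * Real.cos (k * theta n)
        + Real.sin (k * theta n) * Real.sin (k * theta n) = 1 := by nlinarith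
    exact_mod_cast hr
  constructor
  · have key : ∀ k ∈ Icc 1 n,
        Complex.exp (-Complex.I * l * k * theta n) •
          ((Dmat n k).map (fun a => (a : ℂ))).mulVec
            ![((Real.cos (k * theta n) : ℝ) : ℂ), ((Real.sin (k * theta n) : ℝ) : ℂ)]
        = (Complex.exp (-Complex.I * l * k * theta n)
              * (-(((Izero n ^ 3)⁻¹ : ℝ) : ℂ))) • ![(1:ℂ), 0]
          + (if k = n then (((Izero n)⁻¹ : ℝ) : ℂ) • ![(1:ℂ), 0] else 0) := by
      intro k _
      rw [Dmat_mulVec n k hn0]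
      by_cases hk : k = n
      · have hen : Complex.exp (-(Complex.I * (l:ℂ) * (n:ℂ) * ((theta n : ℝ):ℂ))) = 1 := by
          rw [← exp_n_eq_one n l hn0]; ring_nf
        funext i
        fin_cases i <;>
          simp [hk, hen, cos_n n hn0, sin_n n hn0, hdot n] <;> ring
      · funext i
        fin_cases i <;>
          simp [hk, hdot k] <;>
          first
          | ring1
          | linear_combination (((Izero n : ℂ))⁻¹)^3 *
              Complex.sin_sq_add_cos_sq ((k:ℂ) * ((theta n : ℝ):ℂ))
    rw [Finset.sum_congr rfl key, Finset.sum_add_distrib,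
      Finset.sum_ite_eq' (Icc 1 n) n
        (fun _ => (((Izero n)⁻¹ : ℝ) : ℂ) • ![(1:ℂ), 0]),
      if_pos hmem, ← Finset.sum_smul, ← Finset.sum_mul, hgeom]
    funext i
    fin_cases i <;> simp [Izero] <;> push_cast <;> ring
  · have key : ∀ k ∈ Icc 1 n,
        Complex.exp (-Complex.I * l * k * theta n) •
          ((Dmat n k).map (fun a => (a : ℂ))).mulVec
            ![((-Real.sin (k * theta n) : ℝ) : ℂ), ((Real.cos (k * theta n) : ℝ) : ℂ)]
        = (if k = n then (((Izero n)⁻¹ : ℝ) : ℂ) • ![(0:ℂ), 1] else 0) := by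
      intro k _
      rw [Dmat_mulVec n k hn0]
      by_cases hk : k = n
      · have hen : Complex.exp (-(Complex.I * (l:ℂ) * (n:ℂ) * ((theta n : ℝ):ℂ))) = 1 := by
          rw [← exp_n_eq_one n l hn0]; ring_nf
        funext i
        fin_cases i <;>
          simp [hk, hen, cos_n n hn0, sin_n n hn0] <;> first | ring1 | tauto
      · funext i
        fin_cases i <;> simp [hk] <;> first | ring1 | exact Or.inr (by ring)
    rw [Finset.sum_congr rfl key,
      Finset.sum_ite_eq' (Icc 1 n) n
        (fun _ => (((Izero n)⁻¹ : ℝ) : ℂ) • ![(0:ℂ), 1]),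
      if_pos hmem]
    funext i
    fin_cases i <;> simp [Izero] <;> push_cast <;> ring


end
end

section
/- Let n ≥ 3, θ = 2π/n, m ∈ ℝ, and let V ∈ M_{2(n+1)}(ℝ) be the symmetric block matrix with 2×2 blocks V_{kj} (1 ≤ k, j ≤ n+1) given by: V_{kj} = |q_k − q_j|^{−3}(E₂ − 3 u_{kj} u_{kj}ᵀ) for distinct k, j ≤ n with u_{kj} = (q_k − q_j)/|q_k − q_j|; V_{k,n+1} = V_{n+1,k} = m(E₂ − 3 q_k q_kᵀ) for k ≤ n; V_{kk} = −Σ_{j≠k} V_{kj} for every k. Here q_k = (cos kθ, sin kθ)ᵀ for k ≤ n and E₂ is the 2×2 identity. Let ε ∈ (ℝ²)^{n+1} have ε_k = 0 for k ≤ n and ε_{n+1} = (1,0)ᵀ, and let v₁, v₁' ∈ (ℝ²)^{n+1} have components (v₁)_k = cos(kθ)(cos kθ, sin kθ)ᵀ, (v₁')_k = −sin(kθ)(−sin kθ, cos kθ)ᵀ for k ≤ n and (v₁)_{n+1} = (v₁')_{n+1} = 0. Then V ε = m(−2 v₁ + v₁' + (n/2) ε). -/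
open Real Finset Matrix

noncomputable section

/-- The vertex q_k = (cos kθ, sin kθ) as a plain vector of ℝ². -/
def qv (n k : ℕ) : Fin 2 → ℝ := ![Real.cos (k * theta n), Real.sin (k * theta n)]

/-- The Euclidean distance |q_k − q_j| between two vertices. -/
def dEuc (n k j : ℕ) : ℝ :=
  ‖(WithLp.equiv 2 (Fin 2 → ℝ)).symm (qv n k) - (WithLp.equiv 2 (Fin 2 → ℝ)).symm (qv n j)‖

/-- Off-diagonal 2×2 blocks of the Hessian D²U(z₀): bodies i, j are vertices when
i.val < n, j.val < n (vertex index i.val + 1), and the central body when the index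
value equals n. -/
def offBlk (n : ℕ) (m : ℝ) (i j : Fin (n + 1)) : Matrix (Fin 2) (Fin 2) ℝ :=
  if i.val < n ∧ j.val < n then
    (dEuc n (i.val + 1) (j.val + 1) ^ 3)⁻¹ •
      ((1 : Matrix (Fin 2) (Fin 2) ℝ) - 3 • Matrix.vecMulVec
        ((dEuc n (i.val + 1) (j.val + 1))⁻¹ • (qv n (i.val + 1) - qv n (j.val + 1)))
        ((dEuc n (i.val + 1) (j.val + 1))⁻¹ • (qv n (i.val + 1) - qv n (j.val + 1))))
  else if i.val < n then
    m • ((1 : Matrix (Fin 2) (Fin 2) ℝ) - 3 • Matrix.vecMulVec (qv n (i.val + 1)) (qv n (i.val + 1)))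
  else if j.val < n then
    m • ((1 : Matrix (Fin 2) (Fin 2) ℝ) - 3 • Matrix.vecMulVec (qv n (j.val + 1)) (qv n (j.val + 1)))
  else 0

/-- The full block Hessian V = D²U(z₀): V_{kk} = −Σ_{j≠k} V_{kj}. -/
def Vblk (n : ℕ) (m : ℝ) (i j : Fin (n + 1)) : Matrix (Fin 2) (Fin 2) ℝ :=
  if i = j then -∑ j' ∈ Finset.univ.erase i, offBlk n m i j' else offBlk n m i j

/-- ε: first coordinate direction of the central body. -/
def epsv (n : ℕ) : Fin (n + 1) → Fin 2 → ℝ :=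
  fun i => if i.val = n then ![1, 0] else 0

/-- v₁: first Fourier mode, (v₁)_k = cos(kθ)(cos kθ, sin kθ)ᵀ on vertices, 0 at center. -/
def v1vec (n : ℕ) : Fin (n + 1) → Fin 2 → ℝ :=
  fun i => if i.val < n then
    Real.cos ((i.val + 1) * theta n) •
      ![Real.cos ((i.val + 1) * theta n), Real.sin ((i.val + 1) * theta n)]
  else 0

/-- v₁': (v₁')_k = −sin(kθ)(−sin kθ, cos kθ)ᵀ on vertices, 0 at center. -/
def v1vec' (n : ℕ) : Fin (n + 1) → Fin 2 → ℝ :=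
  fun i => if i.val < n then
    (-Real.sin ((i.val + 1) * theta n)) •
      ![-Real.sin ((i.val + 1) * theta n), Real.cos ((i.val + 1) * theta n)]
  else 0

lemma sum_exp_zero (n : ℕ) (hn : 3 ≤ n) :
    ∑ k ∈ Finset.range n, Complex.exp ((2 * ((k:ℝ)+1) * theta n : ℝ) * Complex.I) = 0 := by
  have hn3 : (3:ℝ) ≤ (n:ℝ) := by exact_mod_cast hn
  have hnpos : (0:ℝ) < n := by linarith
  have hnC : (n:ℂ) ≠ 0 := by exact_mod_cast hnpos.ne'
  set z : ℂ := Complex.exp ((2 * theta n : ℝ) * Complex.I) with hz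
  have hzn : z ^ n = 1 := by
    rw [hz, ← Complex.exp_nat_mul]
    have : (n:ℂ) * ((2 * theta n : ℝ) * Complex.I) = (2:ℤ) * (2 * Real.pi * Complex.I) := by
      push_cast [theta]
      field_simp
    rw [this, Complex.exp_int_mul_two_pi_mul_I]
  have hz1 : z ≠ 1 := by
    rw [hz, Ne, Complex.exp_eq_one_iff]
    rintro ⟨k, hk⟩
    have hk' : ((2 * theta n : ℝ) : ℂ) * Complex.I = ((k:ℂ) * (2 * Real.pi)) * Complex.I := by
      rw [hk]; ring
    have h2 : ((2 * theta n : ℝ) : ℂ) = (k:ℂ) * (2 * Real.pi) :=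
      mul_right_cancel₀ Complex.I_ne_zero hk'
    have h3 : 2 * theta n = (k : ℝ) * (2 * Real.pi) := by exact_mod_cast h2
    have hpi := Real.pi_pos
    have htpos : 0 < 2 * theta n := by rw [theta]; positivity
    have htlt : 2 * theta n < 2 * Real.pi := by
      rw [theta]
      have h4 : 2 * (2 * Real.pi / (n:ℝ)) = 4 * Real.pi / n := by ring
      rw [h4, div_lt_iff₀ hnpos]
      nlinarith
    have hk0 : (0:ℝ) < (k:ℝ) := by nlinarith
    have hk1 : (1:ℤ) ≤ k := by exact_mod_cast hk0
    have : (1:ℝ) ≤ (k:ℝ) := by exact_mod_cast hk1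
    nlinarith
  have hgeom : ∑ k ∈ Finset.range n, z ^ k = 0 := by
    rw [geom_sum_eq hz1, hzn, sub_self, zero_div]
  calc ∑ k ∈ Finset.range n, Complex.exp ((2 * ((k:ℝ)+1) * theta n : ℝ) * Complex.I)
      = ∑ k ∈ Finset.range n, z * z ^ k := by
        refine Finset.sum_congr rfl fun k _ => ?_
        rw [hz, ← Complex.exp_nat_mul, ← Complex.exp_add]
        congr 1
        push_cast
        ring
    _ = z * ∑ k ∈ Finset.range n, z ^ k := by rw [Finset.mul_sum]
    _ = 0 := by rw [hgeom, mul_zero]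

lemma sum_cos_zero (n : ℕ) (hn : 3 ≤ n) :
    ∑ k ∈ Finset.range n, Real.cos (2 * ((k:ℝ)+1) * theta n) = 0 := by
  have h : ∑ k ∈ Finset.range n, Real.cos (2 * ((k:ℝ)+1) * theta n)
      = (∑ k ∈ Finset.range n, Complex.exp ((2 * ((k:ℝ)+1) * theta n : ℝ) * Complex.I)).re := by
    rw [Complex.re_sum]
    exact Finset.sum_congr rfl fun k _ => (Complex.exp_ofReal_mul_I_re _).symm
  rw [h, sum_exp_zero n hn, Complex.zero_re]

lemma sum_sin_zero (n : ℕ) (hn : 3 ≤ n) :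
    ∑ k ∈ Finset.range n, Real.sin (2 * ((k:ℝ)+1) * theta n) = 0 := by
  have h : ∑ k ∈ Finset.range n, Real.sin (2 * ((k:ℝ)+1) * theta n)
      = (∑ k ∈ Finset.range n, Complex.exp ((2 * ((k:ℝ)+1) * theta n : ℝ) * Complex.I)).im := by
    rw [Complex.im_sum]
    exact Finset.sum_congr rfl fun k _ => (Complex.exp_ofReal_mul_I_im _).symm
  rw [h, sum_exp_zero n hn, Complex.zero_im]

lemma sum_cc (n : ℕ) (hn : 3 ≤ n) :
    ∑ k ∈ Finset.range n, Real.cos (((k:ℝ)+1) * theta n) * Real.cos (((k:ℝ)+1) * theta n)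
      = n / 2 := by
  have e : ∀ k : ℕ, Real.cos (((k:ℝ)+1) * theta n) * Real.cos (((k:ℝ)+1) * theta n)
      = 1/2 + Real.cos (2 * ((k:ℝ)+1) * theta n) / 2 := by
    intro k
    rw [show (2:ℝ) * ((k:ℝ)+1) * theta n = 2 * (((k:ℝ)+1) * theta n) from by ring,
      Real.cos_two_mul]
    ring
  rw [Finset.sum_congr rfl fun k _ => e k, Finset.sum_add_distrib, Finset.sum_const,
    ← Finset.sum_div, sum_cos_zero n hn, Finset.card_range]
  simp
  ring
lemma sum_sc (n : ℕ) (hn : 3 ≤ n) :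
    ∑ k ∈ Finset.range n, Real.sin (((k:ℝ)+1) * theta n) * Real.cos (((k:ℝ)+1) * theta n)
      = 0 := by
  have e : ∀ k : ℕ, Real.sin (((k:ℝ)+1) * theta n) * Real.cos (((k:ℝ)+1) * theta n)
      = Real.sin (2 * ((k:ℝ)+1) * theta n) / 2 := by
    intro k
    rw [show (2:ℝ) * ((k:ℝ)+1) * theta n = 2 * (((k:ℝ)+1) * theta n) from by ring,
      Real.sin_two_mul]
    ring
  rw [Finset.sum_congr rfl fun k _ => e k, ← Finset.sum_div, sum_sin_zero n hn, zero_div]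
lemma sum_ss (n : ℕ) (hn : 3 ≤ n) :
    ∑ k ∈ Finset.range n, Real.sin (((k:ℝ)+1) * theta n) * Real.sin (((k:ℝ)+1) * theta n)
      = n / 2 := by
  have e : ∀ k : ℕ, Real.sin (((k:ℝ)+1) * theta n) * Real.sin (((k:ℝ)+1) * theta n)
      = 1/2 - Real.cos (2 * ((k:ℝ)+1) * theta n) / 2 := by
    intro k
    have h1 := Real.cos_two_mul (((k:ℝ)+1) * theta n)
    have h2 := Real.sin_sq_add_cos_sq (((k:ℝ)+1) * theta n)
    rw [show (2:ℝ) * ((k:ℝ)+1) * theta n = 2 * (((k:ℝ)+1) * theta n) from by ring]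
    nlinarith
  rw [Finset.sum_congr rfl fun k _ => e k, Finset.sum_sub_distrib, Finset.sum_const,
    ← Finset.sum_div, sum_cos_zero n hn, Finset.card_range]
  simp
  ring

/-- V ε = m(−2 v₁ + v₁' + (n/2) ε). -/
theorem potential_hessian_central_column (n : ℕ) (hn : 3 ≤ n) (m : ℝ) :
    (fun i : Fin (n + 1) => ∑ j : Fin (n + 1), (Vblk n m i j).mulVec (epsv n j))
      = fun i : Fin (n + 1) =>
          m • ((-2 : ℝ) • v1vec n i + v1vec' n i + ((n : ℝ) / 2) • epsv n i) := by
  funext i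
  have hLsum : ∑ j : Fin (n + 1), (Vblk n m i j).mulVec (epsv n j)
      = (Vblk n m i (Fin.last n)).mulVec (epsv n (Fin.last n)) := by
    refine Finset.sum_eq_single (Fin.last n) (fun j _ hj => ?_)
      (fun h => absurd (Finset.mem_univ _) h)
    have hjv : epsv n j = 0 := by
      have hne : j.val ≠ n := fun h => hj (Fin.ext h)
      simp [epsv, hne]
    rw [hjv, Matrix.mulVec_zero]
  have heps : epsv n (Fin.last n) = ![1, 0] := by simp [epsv]
  rw [hLsum, heps]
  by_cases hi : i.val < n
  · -- vertex row
    have hine : i ≠ Fin.last n := by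
      intro h; rw [h] at hi; simp at hi
    rw [Vblk, if_neg hine, offBlk, if_neg (by simp), if_pos hi]
    funext c
    have hpyth := Real.sin_sq_add_cos_sq (((i.val:ℝ) + 1) * theta n)
    fin_cases c <;>
      simp [Matrix.mulVec, Matrix.vecMulVec, dotProduct, Fin.sum_univ_two, qv, v1vec, v1vec',
        epsv, hi, hi.ne, Matrix.one_apply] <;>
      push_cast <;> (first | nlinarith [hpyth] | (left; nlinarith [hpyth]))
  · -- center row
    have hieq : i = Fin.last n := by
      have h2 := i.isLt
      exact Fin.ext (by simp; omega)
    subst hieq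
    rw [Vblk, if_pos rfl]
    have hlast0 : offBlk n m (Fin.last n) (Fin.last n) = 0 := by simp [offBlk]
    have hsum : ∑ j' ∈ Finset.univ.erase (Fin.last n), offBlk n m (Fin.last n) j'
        = ∑ j : Fin (n+1), offBlk n m (Fin.last n) j :=
      Finset.sum_erase _ hlast0
    rw [hsum, Fin.sum_univ_castSucc, hlast0, add_zero]
    have hterm : ∀ j : Fin n, offBlk n m (Fin.last n) (Fin.castSucc j)
        = m • ((1 : Matrix (Fin 2) (Fin 2) ℝ)
            - 3 • Matrix.vecMulVec (qv n (j.val+1)) (qv n (j.val+1))) := by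
      intro j
      simp [offBlk, j.isLt]
    have hmat : ∑ j : Fin n, Matrix.vecMulVec (qv n (j.val+1)) (qv n (j.val+1))
        = ((n:ℝ)/2) • (1 : Matrix (Fin 2) (Fin 2) ℝ) := by
      ext c d
      rw [Matrix.sum_apply]
      fin_cases c <;> fin_cases d <;>
        simp [Matrix.vecMulVec_apply, qv, Matrix.one_apply]
      · exact (Fin.sum_univ_eq_sum_range
          (fun k : ℕ => Real.cos (((k:ℝ)+1) * theta n) * Real.cos (((k:ℝ)+1) * theta n)) n).trans
          (sum_cc n hn)
      · refine (Fin.sum_univ_eq_sum_range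
          (fun k : ℕ => Real.cos (((k:ℝ)+1) * theta n) * Real.sin (((k:ℝ)+1) * theta n)) n).trans ?_
        rw [← sum_sc n hn]
        exact Finset.sum_congr rfl fun k _ => mul_comm _ _
      · exact (Fin.sum_univ_eq_sum_range
          (fun k : ℕ => Real.sin (((k:ℝ)+1) * theta n) * Real.cos (((k:ℝ)+1) * theta n)) n).trans
          (sum_sc n hn)
      · exact (Fin.sum_univ_eq_sum_range
          (fun k : ℕ => Real.sin (((k:ℝ)+1) * theta n) * Real.sin (((k:ℝ)+1) * theta n)) n).trans
          (sum_ss n hn)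
    have hS : ∑ j : Fin n, offBlk n m (Fin.last n) (Fin.castSucc j)
        = (-(m * n)/2) • (1 : Matrix (Fin 2) (Fin 2) ℝ) := by
      rw [Finset.sum_congr rfl (fun j _ => hterm j), ← Finset.smul_sum,
        Finset.sum_sub_distrib, Finset.sum_const, ← Finset.smul_sum, hmat, Finset.card_univ,
        Fintype.card_fin]
      ext c d
      simp only [Matrix.smul_apply, Matrix.sub_apply, Matrix.one_apply]
      simp only [smul_eq_mul, nsmul_eq_mul]
      split <;> push_cast <;> ring
    rw [hS]
    funext c
    fin_cases c <;>
      simp [Matrix.mulVec, dotProduct, Fin.sum_univ_two, v1vec, v1vec', epsv,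
        Matrix.neg_apply, Matrix.smul_apply, Matrix.one_apply] <;> ring

end
end
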